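/- arXiv:2111.07111 — 5 statements merged into one kernel-verified Lean document; each statement's English description precedes it below -/
import Mathlib

section
/- For every complex-valued function g that is twice continuously differentiable on the closed interval [0,1], one has ∫₀¹ |g(r)|²·r dr ≤ ∫₀¹ |(d/dr)(r·g(r))|²·(1/r) dr, where the right-hand side is allowed to be +∞. (Lemma A.1, first part.) -/
/-!
Put `u r = r * g r`, so that `u 0 = 0` and the right-hand side is `A = ∫₀¹ |u'|² / s ds`.
By the fundamental theorem of calculus and the Cauchy–Schwarz inequality with weight `s`,
`|u r|² ≤ (∫₀ʳ s ds) (∫₀ʳ |u'|² / s ds) ≤ r² A`. Hence `|g r|² r = |u r|² / r ≤ r A ≤ A`,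
and integrating over `(0,1)` gives the claim.
-/

open MeasureTheory Filter

/-- One-sided derivative on `(0,1]`. -/
noncomputable def dz (g : ℝ → ℂ) : ℝ → ℂ := derivWithin g (Set.Ioc 0 1)

/-- Weighted integral over `(0,1)` with values in `[0,∞]`. -/
noncomputable def wInt (h : ℝ → ℝ) : ENNReal :=
  ∫⁻ r in Set.Ioo (0 : ℝ) 1, ENNReal.ofReal (h r)

open Set
open scoped ENNReal

theorem ENNReal.sq_lintegral_mul_le {α : Type*} [MeasurableSpace α] (μ : Measure α)
    {f g : α → ℝ≥0∞} (hf : AEMeasurable f μ) (hg : AEMeasurable g μ) :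
    (∫⁻ x, f x * g x ∂μ) ^ 2 ≤ (∫⁻ x, f x ^ 2 ∂μ) * ∫⁻ x, g x ^ 2 ∂μ := by
  have holder := ENNReal.lintegral_mul_le_Lp_mul_Lq μ Real.HolderConjugate.two_two hf hg
  simp only [Pi.mul_apply, ENNReal.rpow_two] at holder
  calc (∫⁻ x, f x * g x ∂μ) ^ 2
      ≤ ((∫⁻ x, f x ^ 2 ∂μ) ^ (1 / 2 : ℝ) * (∫⁻ x, g x ^ 2 ∂μ) ^ (1 / 2 : ℝ)) ^ 2 := by
        gcongr
    _ = (∫⁻ x, f x ^ 2 ∂μ) * ∫⁻ x, g x ^ 2 ∂μ := by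
        rw [mul_pow, ← ENNReal.rpow_two, ← ENNReal.rpow_two, ← ENNReal.rpow_mul,
          ← ENNReal.rpow_mul]
        norm_num

theorem ENNReal.sq_lintegral_le_lintegral_mul_lintegral_sq_div {α : Type*} [MeasurableSpace α]
    (μ : Measure α) {f ρ : α → ℝ≥0∞} (hf : AEMeasurable f μ) (hρ : AEMeasurable ρ μ)
    (hρ_ne_zero : ∀ᵐ x ∂μ, ρ x ≠ 0) (hρ_ne_top : ∀ᵐ x ∂μ, ρ x ≠ ∞) :
    (∫⁻ x, f x ∂μ) ^ 2 ≤ (∫⁻ x, ρ x ∂μ) * ∫⁻ x, f x ^ 2 / ρ x ∂μ := by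
  set s : α → ℝ≥0∞ := fun x => ρ x ^ (1 / 2 : ℝ)
  have hs : AEMeasurable s μ := hρ.pow_const _
  have hs_sq : ∀ x, s x ^ 2 = ρ x := fun x => by
    rw [← ENNReal.rpow_two, ← ENNReal.rpow_mul]
    norm_num
  have hf_eq : ∀ᵐ x ∂μ, f x = s x * (f x / s x) := by
    filter_upwards [hρ_ne_zero, hρ_ne_top] with x h0 htop
    exact (ENNReal.mul_div_cancel (by simp [s, h0]) (by simp [s, htop])).symm
  calc (∫⁻ x, f x ∂μ) ^ 2 = (∫⁻ x, s x * (f x / s x) ∂μ) ^ 2 := by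
        rw [lintegral_congr_ae hf_eq]
    _ ≤ (∫⁻ x, s x ^ 2 ∂μ) * ∫⁻ x, (f x / s x) ^ 2 ∂μ :=
        ENNReal.sq_lintegral_mul_le μ hs (hf.div hs)
    _ = (∫⁻ x, ρ x ∂μ) * ∫⁻ x, f x ^ 2 / ρ x ∂μ := by
        simp only [← ENNReal.rpow_two, ENNReal.div_rpow_of_nonneg _ _ zero_le_two]
        simp only [ENNReal.rpow_two, hs_sq]

theorem ENNReal.ofReal_norm_sq_div {E : Type*} [NormedAddCommGroup E] (x : E) {s : ℝ}
    (hs : 0 < s) : ENNReal.ofReal (‖x‖ ^ 2 / s) = ‖x‖ₑ ^ 2 / ENNReal.ofReal s := by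
  rw [ENNReal.ofReal_div_of_pos hs, ENNReal.ofReal_pow (norm_nonneg x), ofReal_norm]

section Hardy

variable {E : Type*} [NormedAddCommGroup E] [NormedSpace ℝ E] [CompleteSpace E]

/-- `deriv f` is always measurable, so either the right-hand side is infinite or `deriv f` is
integrable and the fundamental theorem of calculus applies. -/
theorem enorm_sub_le_lintegral_enorm_deriv {f : ℝ → E} {a b : ℝ} (hab : a ≤ b)
    (hcont : ContinuousOn f (Icc a b)) (hdiff : DifferentiableOn ℝ f (Ioo a b)) :
    ‖f b - f a‖ₑ ≤ ∫⁻ x in Ioo a b, ‖deriv f x‖ₑ := by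
  by_cases hfin : ∫⁻ x in Ioo a b, ‖deriv f x‖ₑ = ∞
  · simp [hfin]
  have hint : IntervalIntegrable (deriv f) volume a b := by
    rw [intervalIntegrable_iff_integrableOn_Ioo_of_le hab]
    exact ⟨(stronglyMeasurable_deriv f).aestronglyMeasurable, Ne.lt_top hfin⟩
  have hderiv : ∀ x ∈ Ioo a b, HasDerivAt f (deriv f x) x := fun x hx =>
    (hdiff.differentiableAt (isOpen_Ioo.mem_nhds hx)).hasDerivAt
  rw [← intervalIntegral.integral_eq_sub_of_hasDerivAt_of_le hab hcont hderiv hint,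
    intervalIntegral.integral_of_le hab, integral_Ioc_eq_integral_Ioo]
  exact enorm_integral_le_lintegral_enorm _

theorem enorm_sq_le_sq_mul_lintegral_enorm_deriv_sq_div {u : ℝ → E} {r : ℝ} (hr : 0 < r)
    (hcont : ContinuousOn u (Icc 0 r)) (hdiff : DifferentiableOn ℝ u (Ioo 0 r)) (hu0 : u 0 = 0) :
    ‖u r‖ₑ ^ 2 ≤ ENNReal.ofReal r ^ 2 * ∫⁻ s in Ioo 0 r, ‖deriv u s‖ₑ ^ 2 / ENNReal.ofReal s := by
  have hweight : ∫⁻ s in Ioo 0 r, ENNReal.ofReal s ≤ ENNReal.ofReal r ^ 2 :=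
    calc ∫⁻ s in Ioo 0 r, ENNReal.ofReal s ≤ ∫⁻ _ in Ioo 0 r, ENNReal.ofReal r :=
          setLIntegral_mono' measurableSet_Ioo fun s hs => ENNReal.ofReal_le_ofReal hs.2.le
      _ = ENNReal.ofReal r ^ 2 := by rw [setLIntegral_const, Real.volume_Ioo, sub_zero, sq]
  calc ‖u r‖ₑ ^ 2 ≤ (∫⁻ s in Ioo 0 r, ‖deriv u s‖ₑ) ^ 2 := by
        gcongr
        simpa [hu0] using enorm_sub_le_lintegral_enorm_deriv hr.le hcont hdiff
    _ ≤ (∫⁻ s in Ioo 0 r, ENNReal.ofReal s) *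
          ∫⁻ s in Ioo 0 r, ‖deriv u s‖ₑ ^ 2 / ENNReal.ofReal s :=
        ENNReal.sq_lintegral_le_lintegral_mul_lintegral_sq_div _
          (stronglyMeasurable_deriv u).enorm.aemeasurable
          ENNReal.measurable_ofReal.aemeasurable
          ((ae_restrict_mem measurableSet_Ioo).mono fun s hs => by simpa using hs.1)
          (ae_of_all _ fun _ => ENNReal.ofReal_ne_top)
    _ ≤ ENNReal.ofReal r ^ 2 * ∫⁻ s in Ioo 0 r, ‖deriv u s‖ₑ ^ 2 / ENNReal.ofReal s := by
        gcongr

theorem enorm_sq_div_le_lintegral_enorm_deriv_sq_div {u : ℝ → E}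
    (hcont : ContinuousOn u (Icc 0 1)) (hdiff : DifferentiableOn ℝ u (Ioo 0 1)) (hu0 : u 0 = 0)
    {r : ℝ} (hr : r ∈ Ioc 0 1) :
    ‖u r‖ₑ ^ 2 / ENNReal.ofReal r ≤ ∫⁻ s in Ioo 0 1, ‖deriv u s‖ₑ ^ 2 / ENNReal.ofReal s := by
  have hsub : Icc 0 r ⊆ Icc (0 : ℝ) 1 := Icc_subset_Icc_right hr.2
  have hbound := enorm_sq_le_sq_mul_lintegral_enorm_deriv_sq_div hr.1 (hcont.mono hsub)
    (hdiff.mono (Ioo_subset_Ioo_right hr.2)) hu0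
  calc ‖u r‖ₑ ^ 2 / ENNReal.ofReal r
      ≤ ENNReal.ofReal r ^ 2 * (∫⁻ s in Ioo 0 r, ‖deriv u s‖ₑ ^ 2 / ENNReal.ofReal s)
          / ENNReal.ofReal r := by gcongr
    _ = ENNReal.ofReal r * ∫⁻ s in Ioo 0 r, ‖deriv u s‖ₑ ^ 2 / ENNReal.ofReal s := by
        rw [sq, mul_assoc, mul_comm, ENNReal.mul_div_cancel_right
          (ENNReal.ofReal_pos.2 hr.1).ne' ENNReal.ofReal_ne_top]
    _ ≤ 1 * ∫⁻ s in Ioo 0 1, ‖deriv u s‖ₑ ^ 2 / ENNReal.ofReal s :=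
        mul_le_mul' (ENNReal.ofReal_le_one.2 hr.2) (lintegral_mono_set (Ioo_subset_Ioo_right hr.2))
    _ = ∫⁻ s in Ioo 0 1, ‖deriv u s‖ₑ ^ 2 / ENNReal.ofReal s := one_mul _

end Hardy

theorem dz_eq_deriv (g : ℝ → ℂ) {x : ℝ} (hx : x ∈ Ioo 0 1) : dz g x = deriv g x :=
  derivWithin_of_mem_nhds (Ioc_mem_nhds hx.1 hx.2)

/-- Lemma A.1, first part: for `g` twice continuously differentiable on `[0,1]`,
`∫₀¹ |g|² r dr ≤ ∫₀¹ |(d/dr)(r g)|² (1/r) dr`, the right-hand side possibly `+∞`. -/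
theorem poincare_weighted (g : ℝ → ℂ) (hg : ContDiffOn ℝ 2 g (Set.Icc 0 1)) :
    wInt (fun r => ‖g r‖ ^ 2 * r)
      ≤ wInt (fun r => ‖dz (fun s => (s : ℂ) * g s) r‖ ^ 2 / r) := by
  set u : ℝ → ℂ := fun s => (s : ℂ) * g s
  have hu : ContDiffOn ℝ 2 u (Icc 0 1) := Complex.ofRealCLM.contDiff.contDiffOn.mul hg
  set A := wInt (fun r => ‖dz u r‖ ^ 2 / r)
  have hA : A = ∫⁻ s in Ioo 0 1, ‖deriv u s‖ₑ ^ 2 / ENNReal.ofReal s :=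
    setLIntegral_congr_fun measurableSet_Ioo fun s hs => by
      beta_reduce
      rw [dz_eq_deriv u hs, ENNReal.ofReal_norm_sq_div _ hs.1]
  have hpointwise : ∀ r ∈ Ioo (0 : ℝ) 1, ENNReal.ofReal (‖g r‖ ^ 2 * r) ≤ A := by
    intro r hr
    have hnorm : ‖g r‖ ^ 2 * r = ‖u r‖ ^ 2 / r := by
      simp only [u, norm_mul, Complex.norm_real, Real.norm_eq_abs, abs_of_pos hr.1]
      field_simp
    rw [hnorm, ENNReal.ofReal_norm_sq_div _ hr.1, hA]
    exact enorm_sq_div_le_lintegral_enorm_deriv_sq_div hu.continuousOn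
      ((hu.differentiableOn two_ne_zero).mono Ioo_subset_Icc_self) (by simp [u])
      (Ioo_subset_Ioc_self hr)
  calc wInt (fun r => ‖g r‖ ^ 2 * r) ≤ ∫⁻ _ in Ioo (0 : ℝ) 1, A :=
        setLIntegral_mono' measurableSet_Ioo hpointwise
    _ = A := by simp [Real.volume_Ioo]
end

section
/- Let g be a complex-valued function, twice continuously differentiable on [0,1], with g(0) = g(1) = 0. Then ∫₀¹ |(d/dr)(r·g(r))|²·(1/r) dr ≤ (∫₀¹ |(𝓛g)(r)|²·r dr)^{1/2}·(∫₀¹ |g(r)|²·r dr)^{1/2} ≤ ∫₀¹ |(𝓛g)(r)|²·r dr, where all quantities are interpreted in [0,+∞]. (Lemma A.1, second part.) -/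
/-
With `u = r g` one has `u' = g + r g'` and `𝓛 g = (u' / r)'`, so
`(u · conj (u' / r))' = |u'|² / r + u · conj (𝓛 g)`. Integrating over `(ε, 1)` and letting `ε → 0`
(the boundary terms vanish because `g(0) = g(1) = 0`) bounds `∫ |u'|² / r` by `∫ r |g| |𝓛 g|`,
and Cauchy–Schwarz gives the first inequality. For the second, `|u(r)| ≤ ∫₀^r |u'|` and
Cauchy–Schwarz give the Hardy bound `∫ r |g|² ≤ ∫ |u'|² / r`; so `B ≤ A^{1/2} B^{1/2}` with
`B = ∫ r |g|²` finite, i.e. `B^{1/2} ≤ A^{1/2}`.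
-/

open MeasureTheory Filter Set Topology ComplexConjugate
open scoped ENNReal

/-- The operator `(𝓛 g)(r) = g''(r) + (1/r) g'(r) − (1/r²) g(r)`. -/
noncomputable def Lop (g : ℝ → ℂ) : ℝ → ℂ := fun r =>
  dz (dz g) r + ((r : ℂ))⁻¹ * dz g r - (((r : ℂ)) ^ 2)⁻¹ * g r

namespace ENNReal

lemma rpow_half_mul_rpow_half (x : ℝ≥0∞) : x ^ (1 / 2 : ℝ) * x ^ (1 / 2 : ℝ) = x := by
  rw [← rpow_add_of_nonneg _ _ (by norm_num) (by norm_num)]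
  norm_num

lemma rpow_half_mul_le_of_le_rpow_half_mul {a b : ℝ≥0∞} (hb : b ≠ ∞)
    (h : b ≤ a ^ (1 / 2 : ℝ) * b ^ (1 / 2 : ℝ)) : a ^ (1 / 2 : ℝ) * b ^ (1 / 2 : ℝ) ≤ a := by
  rcases eq_or_ne b 0 with rfl | hb0
  · simp
  have hba : b ^ (1 / 2 : ℝ) ≤ a ^ (1 / 2 : ℝ) := by
    rw [← ENNReal.mul_le_mul_iff_left (c := b ^ (1 / 2 : ℝ)) (by simp [hb0]) (by simp [hb]),
      rpow_half_mul_rpow_half]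
    exact h
  calc a ^ (1 / 2 : ℝ) * b ^ (1 / 2 : ℝ) ≤ a ^ (1 / 2 : ℝ) * a ^ (1 / 2 : ℝ) := by gcongr
    _ = a := rpow_half_mul_rpow_half a

end ENNReal

lemma ofReal_intervalIntegral_eq_setLIntegral {f : ℝ → ℝ} {a b : ℝ} (hab : a ≤ b)
    (hf : ContinuousOn f (Icc a b)) (hf0 : ∀ x ∈ Ioo a b, 0 ≤ f x) :
    ENNReal.ofReal (∫ x in a..b, f x) = ∫⁻ x in Ioo a b, ENNReal.ofReal (f x) := by
  rw [intervalIntegral.integral_of_le hab, integral_Ioc_eq_integral_Ioo,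
    ofReal_integral_eq_lintegral_ofReal (hf.integrableOn_Icc.mono_set Ioo_subset_Icc_self)
      ((ae_restrict_iff' measurableSet_Ioo).2 (ae_of_all _ hf0))]

lemma hasDerivAt_derivWithin_Icc {E : Type*} [NormedAddCommGroup E] [NormedSpace ℝ E]
    {f : ℝ → E} {a b x : ℝ} (hf : DifferentiableOn ℝ f (Icc a b)) (hx : x ∈ Ioo a b) :
    HasDerivAt f (derivWithin f (Icc a b) x) x :=
  (hf x (Ioo_subset_Icc_self hx)).hasDerivWithinAt.hasDerivAt (Icc_mem_nhds hx.1 hx.2)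

lemma setLIntegral_norm_mul_norm_le {E F : Type*} [NormedAddCommGroup E] [NormedAddCommGroup F]
    {s : Set ℝ} (hs : MeasurableSet s) (hs0 : s ⊆ Ioi 0) {u : ℝ → E} {w : ℝ → F}
    (hu : AEStronglyMeasurable u (volume.restrict s))
    (hw : AEStronglyMeasurable w (volume.restrict s)) :
    ∫⁻ x in s, ENNReal.ofReal (‖u x‖ * ‖w x‖)
      ≤ (∫⁻ x in s, ENNReal.ofReal (‖u x‖ ^ 2 / x)) ^ (1 / 2 : ℝ)
        * (∫⁻ x in s, ENNReal.ofReal (‖w x‖ ^ 2 * x)) ^ (1 / 2 : ℝ) := by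
  refine le_of_eq_of_le (setLIntegral_congr_fun hs fun x hx => ?_)
    (ENNReal.lintegral_mul_norm_pow_le (by fun_prop) (by fun_prop) (by norm_num) (by norm_num)
      (by norm_num))
  have hx : 0 < x := hs0 hx
  rw [ENNReal.ofReal_rpow_of_nonneg (by positivity) (by norm_num),
    ENNReal.ofReal_rpow_of_nonneg (by positivity) (by norm_num),
    ← ENNReal.ofReal_mul (by positivity), ← Real.mul_rpow (by positivity) (by positivity),
    ← Real.sqrt_eq_rpow, show ‖u x‖ ^ 2 / x * (‖w x‖ ^ 2 * x) = (‖u x‖ * ‖w x‖) ^ 2 by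
      field_simp, Real.sqrt_sq (by positivity)]

lemma setLIntegral_Ioo_le_of_tendsto {f c : ℝ → ℝ≥0∞} {a b : ℝ} {D : ℝ≥0∞}
    (hc : Tendsto c (𝓝[>] a) (𝓝 0)) (h : ∀ ε ∈ Ioo a b, ∫⁻ x in Ioo ε b, f x ≤ c ε + D) :
    ∫⁻ x in Ioo a b, f x ≤ D := by
  have hmono : Monotone fun n : ℕ => Ioo (a + 1 / (n + 1)) b := fun m n hmn =>
    Ioo_subset_Ioo_left (by gcongr)
  have hunion : Ioo a b = ⋃ n : ℕ, Ioo (a + 1 / (n + 1)) b := by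
    ext x
    simp only [mem_Ioo, mem_iUnion]
    refine ⟨fun ⟨hax, hxb⟩ => ?_, fun ⟨n, hnx, hxb⟩ => ⟨lt_of_le_of_lt ?_ hnx, hxb⟩⟩
    · obtain ⟨n, hn⟩ := exists_nat_one_div_lt (sub_pos.2 hax)
      exact ⟨n, by linarith, hxb⟩
    · simp only [le_add_iff_nonneg_right]; positivity
  rw [hunion, setLIntegral_iUnion_of_directed _ hmono.directed_le]
  refine iSup_le fun n => ?_
  rcases le_or_gt b (a + 1 / (n + 1)) with hb | hb
  · rw [Ioo_eq_empty_of_le hb, Measure.restrict_empty, lintegral_zero_measure]; exact zero_le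
  refine ge_of_tendsto (by simpa using hc.add_const D) ?_
  filter_upwards [Ioo_mem_nhdsGT (show a < a + 1 / (n + 1) by simp; positivity)] with ε hε
  exact (lintegral_mono_set (Ioo_subset_Ioo_left hε.2.le)).trans (h ε ⟨hε.1, hε.2.trans hb⟩)

lemma integral_norm_sq_div_le {u U w : ℝ → ℂ} {a b : ℝ} (ha : 0 < a) (hab : a ≤ b)
    (hu : ContinuousOn u (Icc a b)) (hU : ContinuousOn U (Icc a b))
    (hw : ContinuousOn w (Icc a b)) (hu' : ∀ x ∈ Ioo a b, HasDerivAt u (U x) x)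
    (hw' : ∀ x ∈ Ioo a b, HasDerivAt (fun y => U y / y) (w x) x) (hub : u b = 0) :
    ∫ x in a..b, ‖U x‖ ^ 2 / x ≤ ‖u a * conj (U a / a)‖ + ∫ x in a..b, ‖u x‖ * ‖w x‖ := by
  have hpos : ∀ x ∈ Icc a b, (x : ℂ) ≠ 0 := fun x hx =>
    Complex.ofReal_ne_zero.2 (ha.trans_le hx.1).ne'
  have hderiv : ∀ x ∈ Ioo a b, HasDerivAt (fun y => (u y * conj (U y / y)).re)
      (‖U x‖ ^ 2 / x + (u x * conj (w x)).re) x := by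
    intro x hx
    have hprod := (hu' x hx).mul (hw' x hx).star
    refine (Complex.reCLM.hasFDerivAt.comp_hasDerivAt x hprod).congr_deriv ?_
    simp only [Complex.reCLM_apply, RCLike.star_def, Complex.add_re, map_div₀,
      Complex.conj_ofReal, ← mul_div_assoc, RCLike.mul_conj, Complex.div_ofReal_re]
    norm_cast
  have hUc : ContinuousOn (fun x : ℝ => ‖U x‖ ^ 2 / x) (Icc a b) :=
    (hU.norm.pow 2).div continuousOn_id fun x hx => (ha.trans_le hx.1).ne'
  have hwc : ContinuousOn (fun x => (u x * conj (w x)).re) (Icc a b) :=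
    Complex.continuous_re.comp_continuousOn (hu.mul (Complex.continuous_conj.comp_continuousOn hw))
  have hψc : ContinuousOn (fun y : ℝ => (u y * conj (U y / y)).re) (Icc a b) :=
    Complex.continuous_re.comp_continuousOn (hu.mul (Complex.continuous_conj.comp_continuousOn
      (hU.div (Complex.continuous_ofReal.continuousOn) hpos)))
  have hftc := intervalIntegral.integral_eq_sub_of_hasDerivAt_of_le hab hψc hderiv
    ((hUc.add hwc).intervalIntegrable_of_Icc hab)
  rw [intervalIntegral.integral_add (hUc.intervalIntegrable_of_Icc hab)
    (hwc.intervalIntegrable_of_Icc hab), hub, zero_mul, Complex.zero_re, zero_sub] at hftc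
  have hcross : -∫ x in a..b, (u x * conj (w x)).re ≤ ∫ x in a..b, ‖u x‖ * ‖w x‖ := by
    rw [← intervalIntegral.integral_neg]
    refine intervalIntegral.integral_mono_on hab (hwc.neg.intervalIntegrable_of_Icc hab)
      ((hu.norm.mul hw.norm).intervalIntegrable_of_Icc hab) fun x _ => ?_
    simpa using (neg_le_abs _).trans (Complex.abs_re_le_norm (u x * conj (w x)))
  linarith [(neg_le_abs _).trans (Complex.abs_re_le_norm (u a * conj (U a / a)))]

lemma wInt_congr {f h : ℝ → ℝ} (hfh : ∀ x ∈ Ioo 0 1, f x = h x) : wInt f = wInt h :=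
  setLIntegral_congr_fun measurableSet_Ioo fun x hx => by rw [hfh x hx]

lemma wInt_norm_sq_div_le_wInt_norm_mul_norm {u U w : ℝ → ℂ} (hu : ContinuousOn u (Ioc 0 1))
    (hU : ContinuousOn U (Ioc 0 1)) (hw : ContinuousOn w (Ioc 0 1))
    (hu' : ∀ x ∈ Ioo 0 1, HasDerivAt u (U x) x)
    (hw' : ∀ x ∈ Ioo 0 1, HasDerivAt (fun y => U y / y) (w x) x) (hu1 : u 1 = 0)
    (hlim : Tendsto (fun x => u x * conj (U x / x)) (𝓝[>] 0) (𝓝 0)) :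
    wInt (fun x => ‖U x‖ ^ 2 / x) ≤ wInt (fun x => ‖u x‖ * ‖w x‖) := by
  refine setLIntegral_Ioo_le_of_tendsto (c := fun ε => ENNReal.ofReal ‖u ε * conj (U ε / ε)‖)
    (by simpa using ENNReal.tendsto_ofReal hlim.norm) fun ε hε => ?_
  have hsub : Icc ε 1 ⊆ Ioc 0 1 := fun x hx => ⟨hε.1.trans_le hx.1, hx.2⟩
  calc ∫⁻ x in Ioo ε 1, ENNReal.ofReal (‖U x‖ ^ 2 / x)
      = ENNReal.ofReal (∫ x in ε..1, ‖U x‖ ^ 2 / x) :=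
        (ofReal_intervalIntegral_eq_setLIntegral hε.2.le
          (((hU.mono hsub).norm.pow 2).div continuousOn_id fun x hx => (hsub hx).1.ne')
          fun x hx => div_nonneg (sq_nonneg _) (hε.1.trans hx.1).le).symm
    _ ≤ ENNReal.ofReal (‖u ε * conj (U ε / ε)‖ + ∫ x in ε..1, ‖u x‖ * ‖w x‖) :=
        ENNReal.ofReal_le_ofReal <| integral_norm_sq_div_le hε.1 hε.2.le (hu.mono hsub)
          (hU.mono hsub) (hw.mono hsub) (fun x hx => hu' x ⟨hε.1.trans hx.1, hx.2⟩)
          (fun x hx => hw' x ⟨hε.1.trans hx.1, hx.2⟩) hu1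
    _ ≤ ENNReal.ofReal ‖u ε * conj (U ε / ε)‖
          + ∫⁻ x in Ioo ε 1, ENNReal.ofReal (‖u x‖ * ‖w x‖) := by
        rw [← ofReal_intervalIntegral_eq_setLIntegral (f := fun x => ‖u x‖ * ‖w x‖) hε.2.le
          ((hu.mono hsub).norm.mul (hw.mono hsub).norm) fun x _ => by positivity]
        exact ENNReal.ofReal_add_le
    _ ≤ _ := by gcongr; exact lintegral_mono_set (Ioo_subset_Ioo_left hε.1.le)

lemma ofReal_norm_sq_div_le_wInt {u U : ℝ → ℂ} (hu : ContinuousOn u (Icc 0 1))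
    (hU : ContinuousOn U (Icc 0 1)) (hu' : ∀ x ∈ Ioo 0 1, HasDerivAt u (U x) x) (hu0 : u 0 = 0)
    {r : ℝ} (hr : r ∈ Ioo 0 1) :
    ENNReal.ofReal (‖u r‖ ^ 2 / r) ≤ wInt (fun x => ‖U x‖ ^ 2 / x) := by
  set C := wInt (fun x => ‖U x‖ ^ 2 / x)
  set R := ENNReal.ofReal r
  have hsub : Icc 0 r ⊆ Icc 0 1 := Icc_subset_Icc_right hr.2.le
  have hftc : ∫ x in (0 : ℝ)..r, U x = u r := by
    rw [intervalIntegral.integral_eq_sub_of_hasDerivAt_of_le hr.1.le (hu.mono hsub)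
      (fun x hx => hu' x ⟨hx.1, hx.2.trans hr.2⟩)
      ((hU.mono hsub).intervalIntegrable_of_Icc hr.1.le), hu0, sub_zero]
  have hweight : ∫⁻ x in Ioo 0 r, ENNReal.ofReal (‖(1 : ℝ)‖ ^ 2 * x) ≤ R * R :=
    calc ∫⁻ x in Ioo 0 r, ENNReal.ofReal (‖(1 : ℝ)‖ ^ 2 * x) ≤ ∫⁻ _ in Ioo 0 r, R :=
          setLIntegral_mono measurable_const fun x hx =>
            ENNReal.ofReal_le_ofReal (by simpa using hx.2.le)
      _ = R * R := by simp [R]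
  have hcs : ENNReal.ofReal ‖u r‖ ≤ C ^ (1 / 2 : ℝ) * (R * R) ^ (1 / 2 : ℝ) :=
    calc ENNReal.ofReal ‖u r‖ ≤ ENNReal.ofReal (∫ x in (0 : ℝ)..r, ‖U x‖) := by
          rw [← hftc]
          exact ENNReal.ofReal_le_ofReal (intervalIntegral.norm_integral_le_integral_norm hr.1.le)
      _ = ∫⁻ x in Ioo 0 r, ENNReal.ofReal (‖U x‖ * ‖(1 : ℝ)‖) := by
          rw [ofReal_intervalIntegral_eq_setLIntegral hr.1.le (hU.mono hsub).norm
            fun x _ => norm_nonneg _]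
          simp
      _ ≤ _ := (setLIntegral_norm_mul_norm_le measurableSet_Ioo (fun x hx => hx.1)
            ((hU.mono (Ioo_subset_Icc_self.trans hsub)).aestronglyMeasurable measurableSet_Ioo)
            aestronglyMeasurable_const).trans
          (by gcongr; exact lintegral_mono_set (Ioo_subset_Ioo_right hr.2.le))
  calc ENNReal.ofReal (‖u r‖ ^ 2 / r) = ENNReal.ofReal ‖u r‖ ^ 2 / R := by
        rw [ENNReal.ofReal_div_of_pos hr.1, ENNReal.ofReal_pow (norm_nonneg _)]
    _ ≤ (C ^ (1 / 2 : ℝ) * (R * R) ^ (1 / 2 : ℝ)) ^ 2 / R := by gcongr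
    _ = C * R := by
        rw [mul_pow, sq, sq, ENNReal.rpow_half_mul_rpow_half, ENNReal.rpow_half_mul_rpow_half,
          ← mul_assoc, ENNReal.mul_div_cancel_right (by simpa [R] using hr.1) ENNReal.ofReal_ne_top]
    _ ≤ C := mul_le_of_le_one_right' (ENNReal.ofReal_le_one.2 hr.2.le)

lemma wInt_norm_sq_div_le_wInt_norm_deriv_sq_div {u U : ℝ → ℂ} (hu : ContinuousOn u (Icc 0 1))
    (hU : ContinuousOn U (Icc 0 1)) (hu' : ∀ x ∈ Ioo 0 1, HasDerivAt u (U x) x) (hu0 : u 0 = 0) :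
    wInt (fun x => ‖u x‖ ^ 2 / x) ≤ wInt (fun x => ‖U x‖ ^ 2 / x) :=
  calc wInt (fun x => ‖u x‖ ^ 2 / x) ≤ ∫⁻ _ in Ioo (0 : ℝ) 1, wInt (fun x => ‖U x‖ ^ 2 / x) :=
        setLIntegral_mono measurable_const fun _ hr => ofReal_norm_sq_div_le_wInt hu hU hu' hu0 hr
    _ = wInt (fun x => ‖U x‖ ^ 2 / x) := by simp

lemma dz_eq_of_hasDerivAt {f : ℝ → ℂ} {f' : ℂ} {x : ℝ} (hx : x ∈ Ioo 0 1)
    (hf : HasDerivAt f f' x) : dz f x = f' := by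
  rw [dz, derivWithin_of_mem_nhds (Ioc_mem_nhds hx.1 hx.2)]
  exact hf.deriv

section Radial

variable {g g' g'' : ℝ → ℂ}

lemma Lop_eq (hg : ∀ x ∈ Ioo 0 1, HasDerivAt g (g' x) x)
    (hg' : ∀ x ∈ Ioo 0 1, HasDerivAt g' (g'' x) x) {x : ℝ} (hx : x ∈ Ioo 0 1) :
    Lop g x = g'' x + (x : ℂ)⁻¹ * g' x - ((x : ℂ) ^ 2)⁻¹ * g x := by
  have hdz : dz g =ᶠ[𝓝 x] g' :=
    eventually_of_mem (isOpen_Ioo.mem_nhds hx) fun y hy => dz_eq_of_hasDerivAt hy (hg y hy)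
  rw [Lop, dz_eq_of_hasDerivAt hx ((hg' x hx).congr_of_eventuallyEq hdz),
    dz_eq_of_hasDerivAt hx (hg x hx)]

lemma hasDerivAt_ofReal_mul {x : ℝ} (hg : HasDerivAt g (g' x) x) :
    HasDerivAt (fun y : ℝ => (y : ℂ) * g y) (g x + x * g' x) x := by
  have h := (hasDerivAt_id x).ofReal_comp.mul hg
  simp only [id, Complex.ofReal_one, one_mul] at h
  exact h

lemma hasDerivAt_div_ofReal {x : ℝ} (hx : x ≠ 0) (hg : HasDerivAt g (g' x) x)
    (hg' : HasDerivAt g' (g'' x) x) :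
    HasDerivAt (fun y : ℝ => (g y + y * g' y) / y)
      (g'' x + (x : ℂ)⁻¹ * g' x - ((x : ℂ) ^ 2)⁻¹ * g x) x := by
  have hxC : (x : ℂ) ≠ 0 := Complex.ofReal_ne_zero.2 hx
  refine ((hg.add (hasDerivAt_ofReal_mul hg')).div (hasDerivAt_id x).ofReal_comp hxC).congr_deriv ?_
  simp only [id, Complex.ofReal_one, Pi.add_apply]
  field_simp
  ring

lemma wInt_norm_ofReal_mul_sq_div :
    wInt (fun x => ‖(x : ℂ) * g x‖ ^ 2 / x) = wInt (fun x => ‖g x‖ ^ 2 * x) :=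
  wInt_congr fun x hx => by
    rw [norm_mul, Complex.norm_real, Real.norm_of_nonneg hx.1.le]; field_simp

lemma wInt_norm_sq_div_le_radial (hgc : ContinuousOn g (Icc 0 1))
    (hg'c : ContinuousOn g' (Icc 0 1)) (hg''c : ContinuousOn g'' (Icc 0 1))
    (hg : ∀ x ∈ Ioo 0 1, HasDerivAt g (g' x) x) (hg' : ∀ x ∈ Ioo 0 1, HasDerivAt g' (g'' x) x)
    (h0 : g 0 = 0) (h1 : g 1 = 0) :
    wInt (fun x => ‖g x + x * g' x‖ ^ 2 / x)
      ≤ (wInt fun x => ‖g'' x + (x : ℂ)⁻¹ * g' x - ((x : ℂ) ^ 2)⁻¹ * g x‖ ^ 2 * x) ^ (1 / 2 : ℝ)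
        * (wInt fun x => ‖g x‖ ^ 2 * x) ^ (1 / 2 : ℝ) := by
  set L := fun x : ℝ => g'' x + (x : ℂ)⁻¹ * g' x - ((x : ℂ) ^ 2)⁻¹ * g x
  have hUc : ContinuousOn (fun x : ℝ => g x + x * g' x) (Icc 0 1) :=
    hgc.add (Complex.continuous_ofReal.continuousOn.mul hg'c)
  have hLc : ContinuousOn L (Ioc 0 1) := by
    have hinv : ∀ x ∈ Ioc (0 : ℝ) 1, (x : ℂ) ≠ 0 := fun x hx => Complex.ofReal_ne_zero.2 hx.1.ne'
    have hofReal := Complex.continuous_ofReal.continuousOn (s := Ioc (0 : ℝ) 1)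
    exact ((hg''c.mono Ioc_subset_Icc_self).add
      ((hofReal.inv₀ hinv).mul (hg'c.mono Ioc_subset_Icc_self))).sub
      (((hofReal.pow 2).inv₀ fun x hx => pow_ne_zero 2 (hinv x hx)).mul
        (hgc.mono Ioc_subset_Icc_self))
  -- `(r g) · conj ((r g)' / r) = g · conj (g + r g')`, which vanishes at `0`
  have hlim : Tendsto (fun x : ℝ => x * g x * conj ((g x + x * g' x) / x)) (𝓝[>] 0) (𝓝 0) := by
    have hc : Tendsto (fun x : ℝ => g x * conj (g x + x * g' x)) (𝓝[Icc 0 1] 0) (𝓝 0) := by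
      have := ((hgc.mul (Complex.continuous_conj.comp_continuousOn hUc)) 0
        ⟨le_rfl, zero_le_one⟩).tendsto
      rwa [Pi.mul_apply, h0, zero_mul] at this
    have hnhds : 𝓝[>] (0 : ℝ) ≤ 𝓝[Icc 0 1] 0 := by
      rw [← nhdsWithin_Ioo_eq_nhdsGT one_pos]; exact nhdsWithin_mono _ Ioo_subset_Icc_self
    refine (hc.mono_left hnhds).congr' ?_
    filter_upwards [self_mem_nhdsWithin] with x (hx : 0 < x)
    have hxC : (x : ℂ) ≠ 0 := Complex.ofReal_ne_zero.2 hx.ne'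
    simp only [map_div₀, Complex.conj_ofReal]
    field_simp
  have hibp := wInt_norm_sq_div_le_wInt_norm_mul_norm (u := fun x : ℝ => x * g x) (w := L)
    (Complex.continuous_ofReal.continuousOn.mul hgc |>.mono Ioc_subset_Icc_self)
    (hUc.mono Ioc_subset_Icc_self) hLc (fun x hx => hasDerivAt_ofReal_mul (hg x hx))
    (fun x hx => hasDerivAt_div_ofReal hx.1.ne' (hg x hx) (hg' x hx)) (by simp [h1]) hlim
  have hcs := setLIntegral_norm_mul_norm_le (u := fun x : ℝ => x * g x) (w := L)
    measurableSet_Ioo (fun x (hx : x ∈ Ioo 0 1) => hx.1)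
    ((Complex.continuous_ofReal.continuousOn.mul hgc).mono Ioo_subset_Icc_self
      |>.aestronglyMeasurable measurableSet_Ioo)
    ((hLc.mono Ioo_subset_Ioc_self).aestronglyMeasurable measurableSet_Ioo)
  rw [mul_comm]
  exact hibp.trans (hcs.trans_eq (by rw [← wInt, ← wInt, wInt_norm_ofReal_mul_sq_div]))

lemma wInt_norm_sq_mul_le_radial (hgc : ContinuousOn g (Icc 0 1))
    (hg'c : ContinuousOn g' (Icc 0 1)) (hg : ∀ x ∈ Ioo 0 1, HasDerivAt g (g' x) x)
    (h0 : g 0 = 0) :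
    wInt (fun x => ‖g x‖ ^ 2 * x) ≤ wInt (fun x => ‖g x + x * g' x‖ ^ 2 / x) := by
  rw [← wInt_norm_ofReal_mul_sq_div]
  exact wInt_norm_sq_div_le_wInt_norm_deriv_sq_div (Complex.continuous_ofReal.continuousOn.mul hgc)
    (hgc.add (Complex.continuous_ofReal.continuousOn.mul hg'c))
    (fun x hx => hasDerivAt_ofReal_mul (hg x hx)) (by simp [h0])

end Radial

/-- Lemma A.1, second part: for `g` twice continuously differentiable on `[0,1]`
with `g(0) = g(1) = 0`,
`∫₀¹ |(d/dr)(r g)|² (1/r) dr ≤ (∫₀¹ |𝓛g|² r dr)^{1/2} (∫₀¹ |g|² r dr)^{1/2}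
  ≤ ∫₀¹ |𝓛g|² r dr`, with all quantities in `[0,∞]`. -/
theorem poincare_weighted_L (g : ℝ → ℂ) (hg : ContDiffOn ℝ 2 g (Set.Icc 0 1))
    (h0 : g 0 = 0) (h1 : g 1 = 0) :
    wInt (fun r => ‖dz (fun s => (s : ℂ) * g s) r‖ ^ 2 / r)
        ≤ (wInt (fun r => ‖Lop g r‖ ^ 2 * r)) ^ ((1 : ℝ) / 2)
            * (wInt (fun r => ‖g r‖ ^ 2 * r)) ^ ((1 : ℝ) / 2)
      ∧ (wInt (fun r => ‖Lop g r‖ ^ 2 * r)) ^ ((1 : ℝ) / 2)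
            * (wInt (fun r => ‖g r‖ ^ 2 * r)) ^ ((1 : ℝ) / 2)
        ≤ wInt (fun r => ‖Lop g r‖ ^ 2 * r) := by
  have hI : UniqueDiffOn ℝ (Icc (0 : ℝ) 1) := uniqueDiffOn_Icc one_pos
  set g' := derivWithin g (Icc 0 1)
  have hg' : ContDiffOn ℝ 1 g' (Icc 0 1) := hg.derivWithin hI (by norm_num)
  set g'' := derivWithin g' (Icc 0 1)
  have hdg : ∀ x ∈ Ioo 0 1, HasDerivAt g (g' x) x := fun x =>
    hasDerivAt_derivWithin_Icc (hg.differentiableOn (by norm_num))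
  have hdg' : ∀ x ∈ Ioo 0 1, HasDerivAt g' (g'' x) x := fun x =>
    hasDerivAt_derivWithin_Icc (hg'.differentiableOn one_ne_zero)
  have hB : wInt (fun r => ‖g r‖ ^ 2 * r) ≠ ∞ :=
    (((hg.continuousOn.norm.pow 2).mul continuousOn_id).integrableOn_Icc.mono_set
      Ioo_subset_Icc_self).lintegral_lt_top.ne
  have henergy := wInt_norm_sq_div_le_radial hg.continuousOn hg'.continuousOn
    (hg'.derivWithin hI (m := 0) (by norm_num)).continuousOn hdg hdg' h0 h1
  rw [wInt_congr (f := fun r => ‖dz (fun s => (s : ℂ) * g s) r‖ ^ 2 / r) fun x hx => by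
      rw [dz_eq_of_hasDerivAt hx (hasDerivAt_ofReal_mul (hdg x hx))],
    wInt_congr (f := fun r => ‖Lop g r‖ ^ 2 * r) fun x hx => by rw [Lop_eq hdg hdg' hx]]
  exact ⟨henergy, ENNReal.rpow_half_mul_le_of_le_rpow_half_mul hB
    ((wInt_norm_sq_mul_le_radial hg.continuousOn hg'.continuousOn hdg h0).trans henergy)⟩
end

section
/- For every complex-valued function g that is three times continuously differentiable on [0,1], one has |(d/dr)(r·g(r))(1)| ≤ 2·(∫₀¹ |(d/dr)(r·g(r))|²·(1/r) dr)^{1/4}·(∫₀¹ |(𝓛g)(r)|²·r dr)^{1/4} + 4·(∫₀¹ |(d/dr)(r·g(r))|²·(1/r) dr)^{1/2}, where the integrals are allowed to be +∞ (in which case the inequality holds trivially). (Lemma A.2, estimate (estLinfty).) -/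
/-!
Write `u = (r g)'`. A direct computation gives `u' = u / r + r 𝓛g`, hence
`(‖u‖²)' = 2 ‖u‖² / r + 2 r Re ⟪u, 𝓛g⟫ ≤ 2 ‖u‖² / r + 2 ‖u‖ ‖𝓛g‖` on `(0,1]`.
Integrating from a point `a` at which `‖u a‖² / a` does not exceed its mean
`A = ∫₀¹ ‖u‖² / r`, and bounding `∫ ‖u‖ ‖𝓛g‖` by Cauchy–Schwarz, gives
`‖u 1‖² ≤ 3 A + 2 √(A B)` with `B = ∫₀¹ ‖𝓛g‖² r`, and the right-hand side is at most
`(2 A^{1/4} B^{1/4} + 4 A^{1/2})²`. Everything is done in `[0,∞]`, so infinite integrals need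
no separate treatment.
-/

open MeasureTheory Filter

open Set
open scoped RealInnerProductSpace

theorem wInt_eq_setLIntegral_Ioc (h : ℝ → ℝ) :
    wInt h = ∫⁻ r in Ioc 0 1, ENNReal.ofReal (h r) := by
  rw [wInt, Measure.restrict_congr_set Ioo_ae_eq_Ioc]

theorem ENNReal.le_of_sq_le_three_mul_add {c A B : ENNReal}
    (h : c ^ 2 ≤ 3 * A + 2 * A ^ (1 / 2 : ℝ) * B ^ (1 / 2 : ℝ)) :
    c ≤ 2 * A ^ (1 / 4 : ℝ) * B ^ (1 / 4 : ℝ) + 4 * A ^ (1 / 2 : ℝ) := by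
  have hpow : ∀ (D : ENNReal) (n : ℕ), (D ^ (1 / 4 : ℝ)) ^ n = D ^ (n / 4 : ℝ) := fun D n => by
    rw [← ENNReal.rpow_natCast, ← ENNReal.rpow_mul]; ring_nf
  set x := A ^ (1 / 4 : ℝ)
  set y := B ^ (1 / 4 : ℝ)
  have hA : A = x ^ 4 := by rw [hpow]; norm_num
  have hA2 : A ^ (1 / 2 : ℝ) = x ^ 2 := by rw [hpow]; norm_num
  have hB2 : B ^ (1 / 2 : ℝ) = y ^ 2 := by rw [hpow]; norm_num
  rw [hA2, hB2, hA] at h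
  rw [hA2, ← ENNReal.pow_le_pow_left_iff two_ne_zero]
  calc c ^ 2 ≤ 3 * x ^ 4 + 2 * x ^ 2 * y ^ 2 := h
    _ ≤ 3 * x ^ 4 + 2 * x ^ 2 * y ^ 2 + (13 * x ^ 4 + 2 * x ^ 2 * y ^ 2 + 16 * x ^ 3 * y) :=
        le_self_add
    _ = (2 * x * y + 4 * x ^ 2) ^ 2 := by ring

theorem ENNReal.ofReal_mul_eq_rpow_half_mul {x y r : ℝ} (hx : 0 ≤ x) (hy : 0 ≤ y) (hr : 0 < r) :
    ENNReal.ofReal (x * y)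
      = ENNReal.ofReal (x ^ 2 / r) ^ (1 / 2 : ℝ) * ENNReal.ofReal (y ^ 2 * r) ^ (1 / 2 : ℝ) := by
  rw [ENNReal.ofReal_rpow_of_nonneg (by positivity) (by norm_num),
    ENNReal.ofReal_rpow_of_nonneg (by positivity) (by norm_num),
    ← ENNReal.ofReal_mul (by positivity), ← Real.mul_rpow (by positivity) (by positivity),
    ← Real.sqrt_eq_rpow]
  congr
  rw [show x ^ 2 / r * (y ^ 2 * r) = (x * y) ^ 2 by field_simp, Real.sqrt_sq (by positivity)]

section

variable {E : Type*} [NormedAddCommGroup E] {u L : ℝ → E}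

theorem aemeasurable_ofReal_norm_sq_div (hu : ContinuousOn u (Ioc 0 1)) :
    AEMeasurable (fun r => ENNReal.ofReal (‖u r‖ ^ 2 / r)) (volume.restrict (Ioc 0 1)) :=
  ((hu.norm.pow 2).div continuousOn_id fun _ hr => hr.1.ne').aemeasurable
    measurableSet_Ioc |>.ennreal_ofReal

theorem setLIntegral_Ioc_ofReal_le_wInt (hu : ContinuousOn u (Ioc 0 1))
    (hL : ContinuousOn L (Ioc 0 1)) :
    ∫⁻ r in Ioc 0 1, ENNReal.ofReal (2 * (‖u r‖ ^ 2 / r) + 2 * (‖u r‖ * ‖L r‖))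
      ≤ 2 * wInt (fun r => ‖u r‖ ^ 2 / r)
        + 2 * (wInt (fun r => ‖u r‖ ^ 2 / r) ^ (1 / 2 : ℝ)
          * wInt (fun r => ‖L r‖ ^ 2 * r) ^ (1 / 2 : ℝ)) := by
  set F : ℝ → ENNReal := fun r => ENNReal.ofReal (‖u r‖ ^ 2 / r)
  set G : ℝ → ENNReal := fun r => ENNReal.ofReal (‖L r‖ ^ 2 * r)
  have hF : AEMeasurable F (volume.restrict (Ioc 0 1)) := aemeasurable_ofReal_norm_sq_div hu
  have hG : AEMeasurable G (volume.restrict (Ioc 0 1)) :=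
    ((hL.norm.pow 2).mul continuousOn_id).aemeasurable measurableSet_Ioc |>.ennreal_ofReal
  calc ∫⁻ r in Ioc 0 1, ENNReal.ofReal (2 * (‖u r‖ ^ 2 / r) + 2 * (‖u r‖ * ‖L r‖))
      = ∫⁻ r in Ioc 0 1, 2 * F r + 2 * (F r ^ (1 / 2 : ℝ) * G r ^ (1 / 2 : ℝ)) := by
        refine setLIntegral_congr_fun measurableSet_Ioc fun r hr => ?_
        have hr0 := hr.1
        rw [ENNReal.ofReal_add (by positivity) (by positivity), ENNReal.ofReal_mul zero_le_two,
          ENNReal.ofReal_mul zero_le_two,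
          ENNReal.ofReal_mul_eq_rpow_half_mul (norm_nonneg _) (norm_nonneg _) hr.1]
        simp [F, G]
    _ = 2 * (∫⁻ r in Ioc 0 1, F r)
          + 2 * ∫⁻ r in Ioc 0 1, F r ^ (1 / 2 : ℝ) * G r ^ (1 / 2 : ℝ) := by
        rw [lintegral_add_left' (hF.const_mul 2), lintegral_const_mul' _ _ ENNReal.ofNat_ne_top,
          lintegral_const_mul' _ _ ENNReal.ofNat_ne_top]
    _ ≤ _ := by
        rw [wInt_eq_setLIntegral_Ioc, wInt_eq_setLIntegral_Ioc]
        gcongr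
        exact ENNReal.lintegral_mul_norm_pow_le hF hG (by norm_num) (by norm_num) (by norm_num)

variable [InnerProductSpace ℝ E]

theorem norm_sq_sub_norm_sq_eq_integral_inner {u u' : ℝ → E} {a b : ℝ} (hab : a ≤ b)
    (hu : ContinuousOn u (Icc a b)) (hderiv : ∀ x ∈ Ioo a b, HasDerivAt u (u' x) x)
    (hint : IntervalIntegrable (fun x => 2 * ⟪u x, u' x⟫) volume a b) :
    ‖u b‖ ^ 2 - ‖u a‖ ^ 2 = ∫ x in a..b, 2 * ⟪u x, u' x⟫ :=
  (intervalIntegral.integral_eq_sub_of_hasDerivAt_of_le hab (hu.norm.pow 2)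
    (fun x hx => (hderiv x hx).norm_sq) hint).symm

theorem two_mul_inner_inv_smul_add_smul_le {r : ℝ} (hr : r ∈ Ioc 0 1) (z l : E) :
    2 * ⟪z, r⁻¹ • z + r • l⟫ ≤ 2 * (‖z‖ ^ 2 / r) + 2 * (‖z‖ * ‖l‖) := by
  have hzl : r * ⟪z, l⟫ ≤ ‖z‖ * ‖l‖ := calc
    r * ⟪z, l⟫ ≤ r * (‖z‖ * ‖l‖) := mul_le_mul_of_nonneg_left (real_inner_le_norm z l) hr.1.le
    _ ≤ ‖z‖ * ‖l‖ := mul_le_of_le_one_left (by positivity) hr.2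
  rw [inner_add_right, real_inner_smul_right, real_inner_smul_right, real_inner_self_eq_norm_sq,
    div_eq_inv_mul]
  linarith

theorem ofReal_norm_sq_one_le_wInt (hu : ContinuousOn u (Ioc 0 1)) (hL : ContinuousOn L (Ioc 0 1))
    (hderiv : ∀ r ∈ Ioo 0 1, HasDerivAt u (r⁻¹ • u r + r • L r) r) :
    ENNReal.ofReal (‖u 1‖ ^ 2)
      ≤ 3 * wInt (fun r => ‖u r‖ ^ 2 / r)
        + 2 * wInt (fun r => ‖u r‖ ^ 2 / r) ^ (1 / 2 : ℝ)
          * wInt (fun r => ‖L r‖ ^ 2 * r) ^ (1 / 2 : ℝ) := by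
  set A := wInt (fun r => ‖u r‖ ^ 2 / r)
  set h : ℝ → ℝ := fun r => 2 * (‖u r‖ ^ 2 / r) + 2 * (‖u r‖ * ‖L r‖)
  obtain ⟨a, ha, hua⟩ : ∃ a ∈ Ioc (0 : ℝ) 1, ENNReal.ofReal (‖u a‖ ^ 2 / a) ≤ A := by
    have hvol : volume (Ioc (0 : ℝ) 1) = 1 := by simp
    simpa [setLAverage_eq, hvol, ← wInt_eq_setLIntegral_Ioc] using
      exists_le_setLAverage (by simp [hvol]) (by simp [hvol]) (aemeasurable_ofReal_norm_sq_div hu)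
  have hIcc : Icc a 1 ⊆ Ioc 0 1 := Icc_subset_Ioc_iff ha.2 |>.2 ⟨ha.1, le_rfl⟩
  have hh : ContinuousOn h (Icc a 1) :=
    ((continuousOn_const.mul (((hu.norm.pow 2).div continuousOn_id fun _ hr => hr.1.ne'))).add
      (continuousOn_const.mul (hu.norm.mul hL.norm))).mono hIcc
  have hψ : ContinuousOn (fun r => 2 * ⟪u r, r⁻¹ • u r + r • L r⟫) (Icc a 1) :=
    (continuousOn_const.mul (hu.inner (((continuousOn_inv₀.mono fun _ hr => hr.1.ne').smul hu).add
      (continuousOn_id.smul hL)))).mono hIcc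
  have hftc : ‖u 1‖ ^ 2 ≤ ‖u a‖ ^ 2 + ∫ r in a..1, h r := by
    have := norm_sq_sub_norm_sq_eq_integral_inner ha.2 (hu.mono hIcc)
      (fun x hx => hderiv x ⟨ha.1.trans hx.1, hx.2⟩) (hψ.intervalIntegrable_of_Icc ha.2)
    have := intervalIntegral.integral_mono_on ha.2 (hψ.intervalIntegrable_of_Icc ha.2)
      (hh.intervalIntegrable_of_Icc (μ := volume) ha.2)
      fun r hr => two_mul_inner_inv_smul_add_smul_le (hIcc hr) (u r) (L r)
    linarith
  have hint : ENNReal.ofReal (∫ r in a..1, h r) ≤ ∫⁻ r in Ioc 0 1, ENNReal.ofReal (h r) := by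
    rw [intervalIntegral.integral_of_le ha.2, ofReal_integral_eq_lintegral_ofReal
      ((hh.integrableOn_Icc (μ := volume)).mono_set Ioc_subset_Icc_self)]
    · exact lintegral_mono_set (Ioc_subset_Ioc_left ha.1.le)
    · filter_upwards [ae_restrict_mem measurableSet_Ioc] with r hr
      have : 0 < r := ha.1.trans hr.1
      positivity
  calc ENNReal.ofReal (‖u 1‖ ^ 2)
      ≤ ENNReal.ofReal (‖u a‖ ^ 2 / a) + ENNReal.ofReal (∫ r in a..1, h r) := by
        refine (ENNReal.ofReal_le_ofReal ?_).trans ENNReal.ofReal_add_le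
        linarith [le_div_self (sq_nonneg ‖u a‖) ha.1 ha.2]
    _ ≤ A + (2 * A + 2 * (A ^ (1 / 2 : ℝ) * wInt (fun r => ‖L r‖ ^ 2 * r) ^ (1 / 2 : ℝ))) :=
        add_le_add hua (hint.trans (setLIntegral_Ioc_ofReal_le_wInt hu hL))
    _ = _ := by ring

end

theorem dz_ofReal_mul {f : ℝ → ℂ} {r : ℝ} (hr : r ∈ Ioc (0 : ℝ) 1)
    (hf : DifferentiableWithinAt ℝ f (Ioc 0 1) r) :
    dz (fun s => (s : ℂ) * f s) r = f r + r * dz f r := by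
  have hid : HasDerivWithinAt (fun s : ℝ => (s : ℂ)) 1 (Ioc 0 1) r :=
    (hasDerivAt_id r).ofReal_comp.hasDerivWithinAt
  exact ((hid.mul hf.hasDerivWithinAt).derivWithin (uniqueDiffOn_Ioc 0 1 r hr)).trans
    (by rw [one_mul]; rfl)

section

variable {g : ℝ → ℂ} (hg : ContDiffOn ℝ 2 g (Ioc 0 1))
include hg

theorem dz_dz_ofReal_mul {r : ℝ} (hr : r ∈ Ioc (0 : ℝ) 1) :
    dz (dz fun s => (s : ℂ) * g s) r
      = (r : ℂ)⁻¹ * dz (fun s => (s : ℂ) * g s) r + r * Lop g r := by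
  have hg' : DifferentiableOn ℝ g (Ioc 0 1) := hg.differentiableOn two_ne_zero
  have hdg : DifferentiableOn ℝ (dz g) (Ioc 0 1) :=
    (hg.derivWithin (m := 1) (uniqueDiffOn_Ioc 0 1) (by norm_num)).differentiableOn one_ne_zero
  have hEq : EqOn (dz fun s => (s : ℂ) * g s) (fun s : ℝ => g s + s * dz g s) (Ioc 0 1) :=
    fun s hs => dz_ofReal_mul hs (hg' s hs)
  have hr0 : (r : ℂ) ≠ 0 := by exact_mod_cast hr.1.ne'
  have hdiff : DifferentiableWithinAt ℝ (fun s : ℝ => (s : ℂ) * dz g s) (Ioc 0 1) r :=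
    Complex.ofRealCLM.differentiableWithinAt.mul (hdg r hr)
  rw [dz, derivWithin_congr hEq (hEq hr), derivWithin_fun_add (hg' r hr) hdiff, ← dz, ← dz,
    dz_ofReal_mul hr (hdg r hr), hEq hr, Lop]
  field_simp
  ring

theorem continuousOn_Lop : ContinuousOn (Lop g) (Ioc 0 1) := by
  have hdg := hg.derivWithin (m := 1) (uniqueDiffOn_Ioc 0 1) (by norm_num)
  have hg0 := hg.continuousOn
  have hg1 := hdg.continuousOn
  have hg2 := hdg.continuousOn_derivWithin (uniqueDiffOn_Ioc 0 1) le_rfl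
  have hinv : ContinuousOn (fun r : ℝ => (r : ℂ)⁻¹) (Ioc 0 1) :=
    Complex.continuous_ofReal.continuousOn.inv₀ fun r hr => by exact_mod_cast hr.1.ne'
  unfold Lop dz
  simp only [← inv_pow]
  fun_prop

theorem continuousOn_dz_ofReal_mul : ContinuousOn (dz fun s => (s : ℂ) * g s) (Ioc 0 1) :=
  (Complex.ofRealCLM.contDiff.contDiffOn.mul hg).continuousOn_derivWithin
    (uniqueDiffOn_Ioc 0 1) (by norm_num)

theorem hasDerivAt_dz_ofReal_mul {r : ℝ} (hr : r ∈ Ioo (0 : ℝ) 1) :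
    HasDerivAt (dz fun s => (s : ℂ) * g s)
      (r⁻¹ • dz (fun s => (s : ℂ) * g s) r + r • Lop g r) r := by
  have hdiff : DifferentiableOn ℝ (dz fun s => (s : ℂ) * g s) (Ioc 0 1) :=
    ((Complex.ofRealCLM.contDiff.contDiffOn.mul hg).derivWithin (m := 1) (uniqueDiffOn_Ioc 0 1)
      (by norm_num)).differentiableOn one_ne_zero
  have := ((hdiff r (Ioo_subset_Ioc_self hr)).hasDerivWithinAt.hasDerivAt
    (Ioc_mem_nhds hr.1 hr.2))
  rwa [← dz, dz_dz_ofReal_mul hg (Ioo_subset_Ioc_self hr), ← Complex.ofReal_inv,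
    ← Complex.real_smul, ← Complex.real_smul] at this

end

/-- Lemma A.2, estimate (estLinfty): for `g` three times continuously differentiable
on `[0,1]`,
`|(d/dr)(r g)(1)| ≤ 2 (∫₀¹ |(d/dr)(r g)|² (1/r) dr)^{1/4} (∫₀¹ |𝓛g|² r dr)^{1/4}
  + 4 (∫₀¹ |(d/dr)(r g)|² (1/r) dr)^{1/2}`, the integrals possibly `+∞`. -/
theorem boundary_estimate (g : ℝ → ℂ) (hg : ContDiffOn ℝ 3 g (Set.Icc 0 1)) :
    ENNReal.ofReal ‖dz (fun s => (s : ℂ) * g s) 1‖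
      ≤ 2 * (wInt (fun r => ‖dz (fun s => (s : ℂ) * g s) r‖ ^ 2 / r)) ^ ((1 : ℝ) / 4)
            * (wInt (fun r => ‖Lop g r‖ ^ 2 * r)) ^ ((1 : ℝ) / 4)
        + 4 * (wInt (fun r => ‖dz (fun s => (s : ℂ) * g s) r‖ ^ 2 / r)) ^ ((1 : ℝ) / 2) := by
  have hg2 : ContDiffOn ℝ 2 g (Ioc 0 1) := (hg.mono Ioc_subset_Icc_self).of_le (by norm_num)
  have := ofReal_norm_sq_one_le_wInt (continuousOn_dz_ofReal_mul hg2) (continuousOn_Lop hg2)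
    fun r hr => hasDerivAt_dz_ofReal_mul hg2 hr
  rw [ENNReal.ofReal_pow (norm_nonneg _)] at this
  exact ENNReal.le_of_sq_le_three_mul_add this
end

section
/- There exists a constant C > 0 such that for every complex-valued function g that is twice continuously differentiable on [0,1], ∫₀¹ |g(r)|²·r dr ≤ C·(∫₀¹ (1−r²)·|g(r)|²·r dr)^{2/3}·(∫₀¹ |(d/dr)(r·g(r))|²·(1/r) dr)^{1/3} + C·∫₀¹ (1−r²)·|g(r)|²·r dr, where the middle factor is allowed to be +∞. (Lemma A.4, first weighted interpolation inequality.) -/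
open MeasureTheory Filter

/-!
Put `f r = r g r`, `A = ∫₀¹ |g|² r`, `B = ∫₀¹ (1 - r²)|g|² r` and `D = ∫₀¹ |f'|²`. Since
`1 - r² ≥ ε` on `[0, 1 - ε]`, that part of `A` is at most `B / ε`. On `[1 - ε, 1]` the weight `r`
is comparable to `r²`, so it suffices to bound `|f|²` pointwise there: at some
`s ∈ [1 - 2ε, 1 - ε]` the value `|f s|²` is at most its mean, hence at most `B / ε²`, and the
fundamental theorem of calculus together with `2|f||f'| ≤ |f|² / (4ε) + 4ε|f'|²` propagates this
bound to `[1 - ε, 1]` at the cost of `A / (4ε) + 4εD`. Absorbing the resulting `A / 2` gives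
`A ≤ 6B / ε + 16ε²D` for all `ε ≤ 1/4`; the choice `ε = B^{1/3} / (4(B^{1/3} + D^{1/3}))` and
`D ≤ ∫₀¹ |f'|² / r` finish the proof.
-/

open Set intervalIntegral Topology

theorem norm_sq_le_norm_sq_add_integral {E : Type*} [NormedAddCommGroup E]
    [InnerProductSpace ℝ E] {f f' : ℝ → E} {a b c : ℝ} (hab : a ≤ b) (hc : 0 < c)
    (hf : ContinuousOn f (Icc a b)) (hf' : ContinuousOn f' (Icc a b))
    (hderiv : ∀ x ∈ Ioo a b, HasDerivAt f (f' x) x) :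
    ‖f b‖ ^ 2 ≤ ‖f a‖ ^ 2 + c⁻¹ * (∫ x in a..b, ‖f x‖ ^ 2) + c * ∫ x in a..b, ‖f' x‖ ^ 2 := by
  have hint {φ : ℝ → ℝ} (hφ : ContinuousOn φ (Icc a b)) : IntervalIntegrable φ volume a b :=
    hφ.intervalIntegrable_of_Icc hab
  have hψ : IntervalIntegrable (fun x => 2 * inner ℝ (f x) (f' x)) volume a b :=
    hint (continuousOn_const.mul (hf.inner hf'))
  have hftc : ∫ x in a..b, 2 * inner ℝ (f x) (f' x) = ‖f b‖ ^ 2 - ‖f a‖ ^ 2 :=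
    integral_eq_sub_of_hasDeriv_right_of_le hab (hf.norm.pow 2)
      (fun x hx => (hderiv x hx).norm_sq.hasDerivWithinAt) hψ
  have hamgm (x : ℝ) : 2 * inner ℝ (f x) (f' x) ≤ c⁻¹ * ‖f x‖ ^ 2 + c * ‖f' x‖ ^ 2 := by
    have hsq : 0 ≤ c⁻¹ * (‖f x‖ - c * ‖f' x‖) ^ 2 := by positivity
    have hexp : c⁻¹ * (‖f x‖ - c * ‖f' x‖) ^ 2
        = c⁻¹ * ‖f x‖ ^ 2 - 2 * (‖f x‖ * ‖f' x‖) + c * ‖f' x‖ ^ 2 := by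
      field_simp
      ring
    linarith [real_inner_le_norm (f x) (f' x)]
  calc ‖f b‖ ^ 2 = ‖f a‖ ^ 2 + ∫ x in a..b, 2 * inner ℝ (f x) (f' x) := by rw [hftc]; ring
    _ ≤ ‖f a‖ ^ 2 + ∫ x in a..b, (c⁻¹ * ‖f x‖ ^ 2 + c * ‖f' x‖ ^ 2) := by
      gcongr
      exact integral_mono_on hab hψ (hint (by fun_prop)) fun x _ => hamgm x
    _ = ‖f a‖ ^ 2 + c⁻¹ * (∫ x in a..b, ‖f x‖ ^ 2) + c * ∫ x in a..b, ‖f' x‖ ^ 2 := by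
      rw [integral_add ((hint (φ := fun x => ‖f x‖ ^ 2) (hf.norm.pow 2)).const_mul _)
        ((hint (φ := fun x => ‖f' x‖ ^ 2) (hf'.norm.pow 2)).const_mul _),
        intervalIntegral.integral_const_mul, intervalIntegral.integral_const_mul]
      ring

theorem exists_mem_Icc_mul_le_integral {φ : ℝ → ℝ} {a b : ℝ} (hab : a ≤ b)
    (hφ : ContinuousOn φ (Icc a b)) : ∃ s ∈ Icc a b, (b - a) * φ s ≤ ∫ x in a..b, φ x := by
  obtain ⟨s, hs, hmin⟩ := isCompact_Icc.exists_isMinOn (nonempty_Icc.2 hab) hφ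
  refine ⟨s, hs, ?_⟩
  calc (b - a) * φ s = ∫ _ in a..b, φ s := by simp
    _ ≤ ∫ x in a..b, φ x :=
      integral_mono_on hab intervalIntegrable_const (hφ.intervalIntegrable_of_Icc hab) hmin

theorem norm_sq_le_of_mem_Icc_one_sub {E : Type*} [NormedAddCommGroup E] [InnerProductSpace ℝ E]
    {f : ℝ → E} (hf : ContDiffOn ℝ 1 f (Icc 0 1)) {ε r : ℝ} (hε : 0 < ε) (hε' : ε ≤ 1 / 2)
    (hr : r ∈ Icc (1 - ε) 1) :
    ‖f r‖ ^ 2 ≤ ε⁻¹ * (∫ x in (1 - 2 * ε)..(1 - ε), ‖f x‖ ^ 2)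
      + (4 * ε)⁻¹ * (∫ x in 0..1, ‖f x‖ ^ 2)
      + 4 * ε * ∫ x in 0..1, ‖derivWithin f (Icc 0 1) x‖ ^ 2 := by
  set F := derivWithin f (Icc 0 1)
  have hfc : ContinuousOn f (Icc 0 1) := hf.continuousOn
  have hFc : ContinuousOn F (Icc 0 1) :=
    hf.continuousOn_derivWithin (uniqueDiffOn_Icc one_pos) le_rfl
  have hderiv (x : ℝ) (hx : x ∈ Ioo (0 : ℝ) 1) : HasDerivAt f (F x) x :=
    ((hf.differentiableOn one_ne_zero) x (Ioo_subset_Icc_self hx)).hasDerivWithinAt.hasDerivAt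
      (Icc_mem_nhds hx.1 hx.2)
  obtain ⟨s, hs, hsmall⟩ := exists_mem_Icc_mul_le_integral (φ := fun x => ‖f x‖ ^ 2)
    (by linarith : 1 - 2 * ε ≤ 1 - ε)
    ((hfc.norm.pow 2).mono (Icc_subset_Icc (by linarith) (by linarith)))
  have hs0 : 0 ≤ s := by linarith [hs.1]
  have hsr : s ≤ r := by linarith [hs.2, hr.1]
  have hsub : Icc s r ⊆ Icc 0 1 := Icc_subset_Icc hs0 hr.2
  have hfs : ‖f s‖ ^ 2 ≤ ε⁻¹ * ∫ x in (1 - 2 * ε)..(1 - ε), ‖f x‖ ^ 2 := by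
    rw [le_inv_mul_iff₀ hε]
    linarith
  have hsub_int {φ : ℝ → ℝ} (hφ : ContinuousOn φ (Icc 0 1)) (hφ0 : ∀ x, 0 ≤ φ x) :
      ∫ x in s..r, φ x ≤ ∫ x in 0..1, φ x :=
    integral_mono_interval hs0 hsr hr.2 (ae_of_all _ hφ0)
      (hφ.intervalIntegrable_of_Icc zero_le_one)
  have hftc := norm_sq_le_norm_sq_add_integral hsr (by positivity : 0 < 4 * ε)
    (hfc.mono hsub) (hFc.mono hsub)
    fun x hx => hderiv x ⟨hs0.trans_lt hx.1, hx.2.trans_le hr.2⟩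
  have hf_int := hsub_int (φ := fun x => ‖f x‖ ^ 2) (hfc.norm.pow 2) fun x => sq_nonneg _
  have hF_int := hsub_int (φ := fun x => ‖F x‖ ^ 2) (hFc.norm.pow 2) fun x => sq_nonneg _
  have h4ε : 0 ≤ (4 * ε)⁻¹ := by positivity
  nlinarith

theorem norm_ofReal_mul_sq_le {r : ℝ} (hr : r ∈ Icc (0 : ℝ) 1) (z : ℂ) :
    ‖(r : ℂ) * z‖ ^ 2 ≤ ‖z‖ ^ 2 * r := by
  rw [norm_mul, Complex.norm_real, Real.norm_eq_abs, mul_pow, sq_abs]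
  nlinarith [mul_nonneg (mul_nonneg (sq_nonneg ‖z‖) hr.1) (sub_nonneg.2 hr.2)]

theorem norm_sq_mul_le_two_mul_norm_ofReal_mul_sq {r : ℝ} (hr : 1 / 2 ≤ r) (z : ℂ) :
    ‖z‖ ^ 2 * r ≤ 2 * ‖(r : ℂ) * z‖ ^ 2 := by
  rw [norm_mul, Complex.norm_real, Real.norm_eq_abs, mul_pow, sq_abs]
  nlinarith [mul_nonneg (mul_nonneg (sq_nonneg ‖z‖) (by linarith : 0 ≤ r))
    (by linarith : 0 ≤ 2 * r - 1)]

theorem mul_integral_le_integral_one_sub_sq_mul {u : ℝ → ℝ} (hu : ContinuousOn u (Icc 0 1))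
    (hu0 : ∀ r ∈ Icc (0 : ℝ) 1, 0 ≤ u r) {ε : ℝ} (hε : 0 ≤ ε) (hε' : ε ≤ 1) :
    ε * ∫ r in 0..(1 - ε), u r ≤ ∫ r in 0..1, (1 - r ^ 2) * u r := by
  have hw : ContinuousOn (fun r => (1 - r ^ 2) * u r) (Icc 0 1) := by fun_prop
  have hsub : Icc 0 (1 - ε) ⊆ Icc (0 : ℝ) 1 := Icc_subset_Icc le_rfl (by linarith)
  have h1ε : 0 ≤ 1 - ε := by linarith
  calc ε * ∫ r in 0..(1 - ε), u r = ∫ r in 0..(1 - ε), ε * u r :=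
        (intervalIntegral.integral_const_mul _ _).symm
    _ ≤ ∫ r in 0..(1 - ε), (1 - r ^ 2) * u r :=
      integral_mono_on h1ε (((hu.mono hsub).intervalIntegrable_of_Icc h1ε).const_mul _)
        ((hw.mono hsub).intervalIntegrable_of_Icc h1ε) fun r hr =>
          mul_le_mul_of_nonneg_right (by nlinarith [hr.1, hr.2]) (hu0 r (hsub hr))
    _ ≤ ∫ r in 0..1, (1 - r ^ 2) * u r :=
      integral_mono_interval le_rfl h1ε (by linarith)
        ((ae_restrict_iff' measurableSet_Ioc).2 (ae_of_all _ fun r hr =>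
          mul_nonneg (by nlinarith [hr.1, hr.2]) (hu0 r (Ioc_subset_Icc_self hr))))
        (hw.intervalIntegrable_of_Icc zero_le_one)

theorem integral_norm_sq_mul_near_one_le {g : ℝ → ℂ} (hg : ContDiffOn ℝ 1 g (Icc 0 1)) {ε : ℝ}
    (hε : 0 < ε) (hε' : ε ≤ 1 / 4) :
    ∫ r in (1 - ε)..1, ‖g r‖ ^ 2 * r
      ≤ 2 * ((∫ r in 0..1, (1 - r ^ 2) * (‖g r‖ ^ 2 * r)) / ε) + (∫ r in 0..1, ‖g r‖ ^ 2 * r) / 2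
        + 8 * ε ^ 2 * ∫ r in 0..1, ‖derivWithin (fun s : ℝ => (s : ℂ) * g s) (Icc 0 1) r‖ ^ 2 := by
  set f : ℝ → ℂ := fun s => (s : ℂ) * g s
  set u : ℝ → ℝ := fun r => ‖g r‖ ^ 2 * r
  set A := ∫ r in 0..1, u r
  set B := ∫ r in 0..1, (1 - r ^ 2) * u r
  set D := ∫ r in 0..1, ‖derivWithin f (Icc 0 1) r‖ ^ 2
  have hf : ContDiffOn ℝ 1 f (Icc 0 1) := Complex.ofRealCLM.contDiff.contDiffOn.mul hg
  have hu : ContinuousOn u (Icc 0 1) := (hg.continuousOn.norm.pow 2).mul continuousOn_id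
  have hfc : ContinuousOn (fun r => ‖f r‖ ^ 2) (Icc 0 1) := hf.continuousOn.norm.pow 2
  have hfu (r : ℝ) (hr : r ∈ Icc (0 : ℝ) 1) : ‖f r‖ ^ 2 ≤ u r := norm_ofReal_mul_sq_le hr _
  have hf_int : ∫ r in 0..1, ‖f r‖ ^ 2 ≤ A :=
    integral_mono_on zero_le_one (hfc.intervalIntegrable_of_Icc zero_le_one)
      (hu.intervalIntegrable_of_Icc zero_le_one) hfu
  have hf_near : ∫ r in (1 - 2 * ε)..(1 - ε), ‖f r‖ ^ 2 ≤ ε⁻¹ * B := by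
    have hsub : Icc (1 - 2 * ε) (1 - ε) ⊆ Icc 0 1 := Icc_subset_Icc (by linarith) (by linarith)
    have hmono : ∫ r in (1 - 2 * ε)..(1 - ε), ‖f r‖ ^ 2 ≤ ∫ r in 0..(1 - ε), u r :=
      (integral_mono_on (by linarith) ((hfc.mono hsub).intervalIntegrable_of_Icc (by linarith))
        ((hu.mono hsub).intervalIntegrable_of_Icc (by linarith)) fun r hr => hfu r (hsub hr)).trans
      (integral_mono_interval (by linarith) (by linarith) le_rfl
        ((ae_restrict_iff' measurableSet_Ioc).2 (ae_of_all _ fun r hr =>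
          mul_nonneg (sq_nonneg _) hr.1.le))
        ((hu.mono (Icc_subset_Icc le_rfl (by linarith))).intervalIntegrable_of_Icc
          (by linarith)))
    have hleft := mul_integral_le_integral_one_sub_sq_mul hu
      (fun r hr => mul_nonneg (sq_nonneg _) hr.1) hε.le (by linarith)
    rw [le_inv_mul_iff₀ hε]
    nlinarith
  set M := ε⁻¹ * (ε⁻¹ * B) + (4 * ε)⁻¹ * A + 4 * ε * D
  have hu_near (r : ℝ) (hr : r ∈ Icc (1 - ε) 1) : u r ≤ 2 * M := by
    have hfr := norm_sq_le_of_mem_Icc_one_sub hf hε (by linarith) hr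
    have hur : u r ≤ 2 * ‖f r‖ ^ 2 :=
      norm_sq_mul_le_two_mul_norm_ofReal_mul_sq (by linarith [hr.1]) _
    have h4ε : 0 ≤ (4 * ε)⁻¹ := by positivity
    have hεinv : 0 ≤ ε⁻¹ := by positivity
    nlinarith
  calc ∫ r in (1 - ε)..1, u r ≤ ∫ _ in (1 - ε)..1, 2 * M :=
        integral_mono_on (by linarith)
          ((hu.mono (Icc_subset_Icc (by linarith) le_rfl)).intervalIntegrable_of_Icc
            (by linarith)) intervalIntegrable_const hu_near
    _ = 2 * (B / ε) + A / 2 + 8 * ε ^ 2 * D := by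
      rw [intervalIntegral.integral_const, sub_sub_cancel, smul_eq_mul]
      simp only [M]
      field_simp
      ring

theorem integral_norm_sq_mul_le {g : ℝ → ℂ} (hg : ContDiffOn ℝ 1 g (Icc 0 1)) {ε : ℝ}
    (hε : 0 < ε) (hε' : ε ≤ 1 / 4) :
    ∫ r in 0..1, ‖g r‖ ^ 2 * r
      ≤ 6 * (∫ r in 0..1, (1 - r ^ 2) * ‖g r‖ ^ 2 * r) / ε
        + 16 * ε ^ 2 * ∫ r in 0..1, ‖derivWithin (fun s : ℝ => (s : ℂ) * g s) (Icc 0 1) r‖ ^ 2 := by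
  set u : ℝ → ℝ := fun r => ‖g r‖ ^ 2 * r
  have hu : ContinuousOn u (Icc 0 1) := (hg.continuousOn.norm.pow 2).mul continuousOn_id
  have hB : ∫ r in 0..1, (1 - r ^ 2) * ‖g r‖ ^ 2 * r = ∫ r in 0..1, (1 - r ^ 2) * u r := by
    simp only [u, mul_assoc]
  have hleft := mul_integral_le_integral_one_sub_sq_mul hu
    (fun r hr => mul_nonneg (sq_nonneg _) hr.1) hε.le (by linarith)
  have hleft' : ∫ r in 0..(1 - ε), u r ≤ (∫ r in 0..1, (1 - r ^ 2) * u r) / ε := by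
    rw [le_div_iff₀ hε]
    linarith
  have hright := integral_norm_sq_mul_near_one_le hg hε hε'
  have hsplit : (∫ r in 0..(1 - ε), u r) + ∫ r in (1 - ε)..1, u r = ∫ r in 0..1, u r :=
    integral_add_adjacent_intervals (b := 1 - ε) (μ := volume)
      ((hu.mono (Icc_subset_Icc le_rfl (by linarith))).intervalIntegrable_of_Icc (by linarith))
      ((hu.mono (Icc_subset_Icc (by linarith) le_rfl)).intervalIntegrable_of_Icc (by linarith))
  rw [hB, mul_div_assoc]
  linarith

theorem le_of_forall_le_div_add_sq_mul {A B D : ℝ} (hB : 0 ≤ B) (hD : 0 ≤ D)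
    (h : ∀ ε : ℝ, 0 < ε → ε ≤ 1 / 4 → A ≤ 6 * B / ε + 16 * ε ^ 2 * D) :
    A ≤ 25 * B ^ ((2 : ℝ) / 3) * D ^ ((1 : ℝ) / 3) + 25 * B := by
  rcases hB.eq_or_lt with rfl | hBpos
  · have hlim : Tendsto (fun ε : ℝ => 16 * ε ^ 2 * D) (𝓝[>] 0) (𝓝 0) := by
      have hcont : Tendsto (fun ε : ℝ => 16 * ε ^ 2 * D) (𝓝 0) (𝓝 (16 * 0 ^ 2 * D)) :=
        (by fun_prop : Continuous fun ε : ℝ => 16 * ε ^ 2 * D).tendsto 0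
      simpa using hcont.mono_left nhdsWithin_le_nhds
    have hA : A ≤ 0 := ge_of_tendsto hlim <| by
      filter_upwards [Ioo_mem_nhdsGT (by norm_num : (0 : ℝ) < 1 / 4)] with ε hε
      simpa using h ε hε.1 hε.2.le
    simpa using hA
  · set a := B ^ ((1 : ℝ) / 3)
    set b := D ^ ((1 : ℝ) / 3)
    have ha : 0 < a := by positivity
    have hb : 0 ≤ b := by positivity
    have hcube {x : ℝ} (hx : 0 ≤ x) : (x ^ ((1 : ℝ) / 3)) ^ 3 = x := by
      rw [← Real.rpow_natCast, ← Real.rpow_mul hx]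
      norm_num
    have ha2 : B ^ ((2 : ℝ) / 3) = a ^ 2 := by
      rw [← Real.rpow_natCast, ← Real.rpow_mul hB]
      norm_num
    have hA := h (a / (4 * (a + b))) (by positivity)
      (by rw [div_le_iff₀ (by positivity)]; linarith)
    rw [← hcube hB, ← hcube hD] at hA
    rw [ha2, ← hcube hB]
    have h1 : 6 * a ^ 3 / (a / (4 * (a + b))) = 24 * a ^ 2 * (a + b) := by
      field_simp
      ring
    have h2 : 16 * (a / (4 * (a + b))) ^ 2 * b ^ 3 ≤ a ^ 2 * b := by
      rw [div_pow, mul_pow, ← mul_div_assoc, div_mul_eq_mul_div, div_le_iff₀ (by positivity)]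
      have hb2 : b ^ 2 ≤ (a + b) ^ 2 := by nlinarith
      nlinarith [mul_le_mul_of_nonneg_left hb2 (by positivity : 0 ≤ a ^ 2 * b)]
    nlinarith [pow_pos ha 3]

theorem wInt_eq_ofReal_integral {h : ℝ → ℝ} (hc : ContinuousOn h (Icc 0 1))
    (hnn : ∀ r ∈ Ioo (0 : ℝ) 1, 0 ≤ h r) : wInt h = ENNReal.ofReal (∫ r in 0..1, h r) := by
  rw [wInt, integral_of_le zero_le_one, integral_Ioc_eq_integral_Ioo,
    ofReal_integral_eq_lintegral_ofReal (hc.integrableOn_Icc.mono_set Ioo_subset_Icc_self)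
      ((ae_restrict_iff' measurableSet_Ioo).2 (ae_of_all _ hnn))]

theorem ofReal_integral_norm_sq_derivWithin_le_wInt {f : ℝ → ℂ} (hf : ContDiffOn ℝ 1 f (Icc 0 1)) :
    ENNReal.ofReal (∫ r in 0..1, ‖derivWithin f (Icc 0 1) r‖ ^ 2)
      ≤ wInt (fun r => ‖dz f r‖ ^ 2 / r) := by
  have hFc : ContinuousOn (fun r => ‖derivWithin f (Icc 0 1) r‖ ^ 2) (Icc 0 1) :=
    (hf.continuousOn_derivWithin (uniqueDiffOn_Icc one_pos) le_rfl).norm.pow 2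
  rw [← wInt_eq_ofReal_integral hFc fun r _ => sq_nonneg _, wInt]
  refine lintegral_mono_ae ((ae_restrict_iff' measurableSet_Ioo).2 (ae_of_all _ fun r hr => ?_))
  dsimp only
  rw [dz, derivWithin_of_mem_nhds (Ioc_mem_nhds hr.1 hr.2),
    derivWithin_of_mem_nhds (Icc_mem_nhds hr.1 hr.2)]
  exact ENNReal.ofReal_le_ofReal (le_div_self (sq_nonneg _) hr.1 hr.2.le)

/-- Lemma A.4, first weighted interpolation inequality: there is `C > 0` such that
for every `g` twice continuously differentiable on `[0,1]`,
`∫₀¹ |g|² r dr ≤ C (∫₀¹ (1−r²)|g|² r dr)^{2/3} (∫₀¹ |(d/dr)(r g)|² (1/r) dr)^{1/3}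
  + C ∫₀¹ (1−r²)|g|² r dr`, the middle factor possibly `+∞`. -/
theorem weighted_interpolation_first :
    ∃ C : ℝ, 0 < C ∧ ∀ g : ℝ → ℂ, ContDiffOn ℝ 2 g (Set.Icc 0 1) →
      wInt (fun r => ‖g r‖ ^ 2 * r)
        ≤ ENNReal.ofReal C * (wInt (fun r => (1 - r ^ 2) * ‖g r‖ ^ 2 * r)) ^ ((2 : ℝ) / 3)
              * (wInt (fun r => ‖dz (fun s => (s : ℂ) * g s) r‖ ^ 2 / r)) ^ ((1 : ℝ) / 3)
          + ENNReal.ofReal C * wInt (fun r => (1 - r ^ 2) * ‖g r‖ ^ 2 * r) := by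
  refine ⟨25, by norm_num, fun g hg => ?_⟩
  have hg1 : ContDiffOn ℝ 1 g (Icc 0 1) := hg.of_le one_le_two
  have hgc : ContinuousOn g (Icc 0 1) := hg1.continuousOn
  set B := ∫ r in 0..1, (1 - r ^ 2) * ‖g r‖ ^ 2 * r
  set D := ∫ r in 0..1, ‖derivWithin (fun s : ℝ => (s : ℂ) * g s) (Icc 0 1) r‖ ^ 2
  have hw_nonneg (r : ℝ) (hr : r ∈ Icc (0 : ℝ) 1) : 0 ≤ (1 - r ^ 2) * ‖g r‖ ^ 2 * r :=
    mul_nonneg (mul_nonneg (by nlinarith [hr.1, hr.2]) (sq_nonneg _)) hr.1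
  have hB : 0 ≤ B := integral_nonneg zero_le_one hw_nonneg
  have hD : 0 ≤ D := integral_nonneg zero_le_one fun r _ => sq_nonneg _
  have hmain := le_of_forall_le_div_add_sq_mul hB hD fun ε hε hε' =>
    integral_norm_sq_mul_le hg1 hε hε'
  rw [wInt_eq_ofReal_integral (h := fun r => ‖g r‖ ^ 2 * r) (by fun_prop)
      fun r hr => mul_nonneg (sq_nonneg _) hr.1.le,
    wInt_eq_ofReal_integral (h := fun r => (1 - r ^ 2) * ‖g r‖ ^ 2 * r) (by fun_prop)
      fun r hr => hw_nonneg r (Ioo_subset_Icc_self hr)]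
  calc ENNReal.ofReal (∫ r in 0..1, ‖g r‖ ^ 2 * r)
      ≤ ENNReal.ofReal (25 * B ^ ((2 : ℝ) / 3) * D ^ ((1 : ℝ) / 3) + 25 * B) :=
        ENNReal.ofReal_le_ofReal hmain
    _ = ENNReal.ofReal 25 * ENNReal.ofReal B ^ ((2 : ℝ) / 3) * ENNReal.ofReal D ^ ((1 : ℝ) / 3)
          + ENNReal.ofReal 25 * ENNReal.ofReal B := by
        rw [ENNReal.ofReal_add (by positivity) (by positivity), ENNReal.ofReal_mul (by positivity),
          ENNReal.ofReal_mul (by positivity), ENNReal.ofReal_mul (by positivity),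
          ENNReal.ofReal_rpow_of_nonneg hB (by norm_num),
          ENNReal.ofReal_rpow_of_nonneg hD (by norm_num)]
    _ ≤ _ := by
        gcongr
        exact ofReal_integral_norm_sq_derivWithin_le_wInt
          (Complex.ofRealCLM.contDiff.contDiffOn.mul hg1)
end

section
/- For all real numbers x, y with 0 < x < y, one has e^{x−y}·(x/y) < I₁(x)/I₁(y) < e^{x−y}·(y/x)^{1/2}. (Lemma A.6, ratio bounds for the modified Bessel function of the first kind.) -/
/-!
Write `J(x) = x I₁'(x)`. Termwise, `x J'(x) = (1 + x²) I₁(x)` (the Bessel equation) and `I₁ ≤ J`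
on `[0, ∞)`. The lower bound says that `e^{-t} I₁(t) / t` decreases, i.e. `J < (1 + t) I₁`:
the function `t e^t ((1 + t) I₁ - J)` vanishes at `0` and has derivative `3 t e^t I₁ > 0`.
The upper bound says that `√t e^{-t} I₁(t)` increases, i.e. `(2t - 1) I₁ < 2J`: this is clear
from `I₁ ≤ J` for `t ≤ 1`, and it persists for `t ≥ 1` because `e^t (2J - (2t - 1) I₁) / √t`
has derivative `3 e^t I₁ / (2 t √t) > 0`.
-/

/-- The modified Bessel function of the first kind of order one,
`I₁(x) = Σ_{k=0}^∞ (1/(k! (k+1)!)) (x/2)^{2k+1}`. -/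
noncomputable def besselI1 (x : ℝ) : ℝ :=
  ∑' k : ℕ, 1 / ((Nat.factorial k : ℝ) * (Nat.factorial (k + 1) : ℝ)) * (x / 2) ^ (2 * k + 1)

open Real Set

noncomputable def oddPowerSeries (a : ℕ → ℝ) (x : ℝ) : ℝ := ∑' k, a k * x ^ (2 * k + 1)

section OddPowerSeries

variable {a b : ℕ → ℝ}

lemma summable_two_mul_add_one_mul (ha : ∀ r, Summable fun k => a k * r ^ k) (r : ℝ) :
    Summable fun k => (2 * k + 1) * a k * r ^ k := by
  refine .of_norm_bounded ((ha (2 * |r|)).norm.mul_left 2) fun k => ?_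
  simp only [norm_mul, norm_pow, Real.norm_eq_abs, abs_abs, abs_two]
  rw [abs_of_nonneg (by positivity : (0 : ℝ) ≤ 2 * k + 1), mul_pow]
  have : (k : ℝ) + 1 ≤ 2 ^ k := by exact_mod_cast Nat.lt_two_pow_self
  calc (2 * k + 1) * |a k| * |r| ^ k ≤ 2 * 2 ^ k * |a k| * |r| ^ k := by gcongr; linarith
    _ = 2 * (|a k| * (2 ^ k * |r| ^ k)) := by ring

lemma summable_oddPowerSeries (ha : ∀ r, Summable fun k => a k * r ^ k) (x : ℝ) :
    Summable fun k => a k * x ^ (2 * k + 1) :=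
  ((ha (x ^ 2)).mul_left x).congr fun k => by ring

lemma hasDerivAt_oddPowerSeries (ha : ∀ r, Summable fun k => a k * r ^ k) (x : ℝ) :
    HasDerivAt (oddPowerSeries a) (∑' k, (2 * k + 1) * a k * x ^ (2 * k)) x := by
  set R := |x| + 1
  have hR : 0 < R := by positivity
  have hmem : ∀ y ∈ Metric.ball (0 : ℝ) R, |y| ≤ R := fun y hy => by
    rw [Metric.mem_ball, dist_zero_right, Real.norm_eq_abs] at hy; exact hy.le
  show HasDerivAt (fun y => ∑' k, a k * y ^ (2 * k + 1)) _ x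
  apply hasDerivAt_tsum_of_isPreconnected (t := Metric.ball 0 R) (y₀ := 0)
    (g := fun k y => a k * y ^ (2 * k + 1)) (g' := fun k y => (2 * k + 1) * a k * y ^ (2 * k))
    (summable_two_mul_add_one_mul ha (R ^ 2)).norm Metric.isOpen_ball
    (convex_ball 0 R).isPreconnected
  · intro k y _
    refine ((hasDerivAt_pow (2 * k + 1) y).const_mul (a k)).congr_deriv ?_
    rw [Nat.add_sub_cancel]
    push_cast
    ring
  · intro k y hy
    simp only [norm_mul, norm_pow, pow_mul, Real.norm_eq_abs, abs_of_pos hR]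
    gcongr
    exact hmem y hy
  · exact Metric.mem_ball_self hR
  · simp
  · simp [R]

lemma continuous_oddPowerSeries (ha : ∀ r, Summable fun k => a k * r ^ k) :
    Continuous (oddPowerSeries a) :=
  continuous_iff_continuousAt.2 fun x => (hasDerivAt_oddPowerSeries ha x).continuousAt

lemma hasDerivAt_oddPowerSeries_of_ne_zero (ha : ∀ r, Summable fun k => a k * r ^ k) {x : ℝ}
    (hx : x ≠ 0) :
    HasDerivAt (oddPowerSeries a) (oddPowerSeries (fun k => (2 * k + 1) * a k) x / x) x := by
  refine (hasDerivAt_oddPowerSeries ha x).congr_deriv ?_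
  rw [eq_div_iff hx, oddPowerSeries, ← tsum_mul_right]
  exact tsum_congr fun k => by ring

lemma oddPowerSeries_pos (ha : ∀ r, Summable fun k => a k * r ^ k) (hpos : ∀ k, 0 < a k)
    {x : ℝ} (hx : 0 < x) : 0 < oddPowerSeries a x :=
  (summable_oddPowerSeries ha x).tsum_pos (fun k => (mul_pos (hpos k) (pow_pos hx _)).le) 0
    (mul_pos (hpos 0) (pow_pos hx _))

lemma oddPowerSeries_le_oddPowerSeries (ha : ∀ r, Summable fun k => a k * r ^ k)
    (hb : ∀ r, Summable fun k => b k * r ^ k) (hab : ∀ k, a k ≤ b k) {x : ℝ} (hx : 0 ≤ x) :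
    oddPowerSeries a x ≤ oddPowerSeries b x :=
  (summable_oddPowerSeries ha x).tsum_le_tsum
    (fun k => mul_le_mul_of_nonneg_right (hab k) (pow_nonneg hx _)) (summable_oddPowerSeries hb x)

lemma oddPowerSeries_add (ha : ∀ r, Summable fun k => a k * r ^ k)
    (hb : ∀ r, Summable fun k => b k * r ^ k) (x : ℝ) :
    oddPowerSeries (fun k => a k + b k) x = oddPowerSeries a x + oddPowerSeries b x := by
  rw [oddPowerSeries, oddPowerSeries, oddPowerSeries,
    ← (summable_oddPowerSeries ha x).tsum_add (summable_oddPowerSeries hb x)]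
  exact tsum_congr fun k => by ring

lemma sq_mul_oddPowerSeries (hb : ∀ r, Summable fun k => b k * r ^ k) (hb0 : b 0 = 0)
    (hb_succ : ∀ k, b (k + 1) = a k) (x : ℝ) :
    x ^ 2 * oddPowerSeries a x = oddPowerSeries b x := by
  rw [oddPowerSeries, oddPowerSeries, (summable_oddPowerSeries hb x).tsum_eq_zero_add, hb0,
    zero_mul, zero_add, ← tsum_mul_left]
  exact tsum_congr fun k => by rw [hb_succ]; ring

end OddPowerSeries

noncomputable def besselI1Coeff (k : ℕ) : ℝ :=
  1 / ((k.factorial : ℝ) * ((k + 1).factorial : ℝ)) / 2 ^ (2 * k + 1)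

lemma besselI1Coeff_pos (k : ℕ) : 0 < besselI1Coeff k := by
  unfold besselI1Coeff; positivity

lemma besselI1Coeff_le (k : ℕ) : besselI1Coeff k ≤ 1 / (k.factorial : ℝ) := by
  unfold besselI1Coeff
  rw [div_div]
  have h1 : (1 : ℝ) ≤ (k + 1).factorial := by exact_mod_cast (k + 1).factorial_pos
  have h2 : (1 : ℝ) ≤ 2 ^ (2 * k + 1) := one_le_pow₀ one_le_two
  refine one_div_le_one_div_of_le (by positivity) ?_
  rw [mul_assoc]
  exact le_mul_of_one_le_right (by positivity) (one_le_mul_of_one_le_of_one_le h1 h2)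

lemma besselI1Coeff_succ (k : ℕ) :
    4 * ((k : ℝ) + 1) * (k + 2) * besselI1Coeff (k + 1) = besselI1Coeff k := by
  unfold besselI1Coeff
  rw [Nat.factorial_succ (k + 1), Nat.factorial_succ k]
  push_cast
  field_simp
  ring

lemma summable_besselI1Coeff_mul_pow (r : ℝ) : Summable fun k => besselI1Coeff k * r ^ k := by
  refine .of_norm_bounded (Real.summable_pow_div_factorial |r|) fun k => ?_
  rw [norm_mul, norm_pow, Real.norm_eq_abs, Real.norm_eq_abs, abs_of_pos (besselI1Coeff_pos k),
    mul_comm, div_eq_mul_one_div]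
  exact mul_le_mul_of_nonneg_left (besselI1Coeff_le k) (by positivity)

lemma besselI1_eq_oddPowerSeries : besselI1 = oddPowerSeries besselI1Coeff := by
  ext x
  exact tsum_congr fun k => by rw [besselI1Coeff, div_pow]; ring

-- `x I₁'(x)`, the Euler operator `x d/dx` applied to `I₁`.
noncomputable def eulerBesselI1 : ℝ → ℝ :=
  oddPowerSeries fun k => (2 * k + 1) * besselI1Coeff k

lemma summable_eulerBesselI1Coeff_mul_pow (r : ℝ) :
    Summable fun k => (2 * k + 1) * besselI1Coeff k * r ^ k :=
  summable_two_mul_add_one_mul summable_besselI1Coeff_mul_pow r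

@[fun_prop]
lemma continuous_besselI1 : Continuous besselI1 :=
  besselI1_eq_oddPowerSeries ▸ continuous_oddPowerSeries summable_besselI1Coeff_mul_pow

@[fun_prop]
lemma continuous_eulerBesselI1 : Continuous eulerBesselI1 :=
  continuous_oddPowerSeries summable_eulerBesselI1Coeff_mul_pow

lemma hasDerivAt_besselI1 {x : ℝ} (hx : x ≠ 0) :
    HasDerivAt besselI1 (eulerBesselI1 x / x) x :=
  besselI1_eq_oddPowerSeries ▸
    hasDerivAt_oddPowerSeries_of_ne_zero summable_besselI1Coeff_mul_pow hx

-- The modified Bessel equation `(x d/dx)² I₁ = (1 + x²) I₁`, read off the coefficient recursion.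
lemma eulerSq_besselI1_eq (x : ℝ) :
    oddPowerSeries (fun k => (2 * k + 1) * ((2 * k + 1) * besselI1Coeff k)) x
      = (1 + x ^ 2) * besselI1 x := by
  set b : ℕ → ℝ := fun k => ((2 * k + 1) ^ 2 - 1) * besselI1Coeff k
  have hb : ∀ r, Summable fun k => b k * r ^ k := fun r =>
    ((summable_two_mul_add_one_mul summable_eulerBesselI1Coeff_mul_pow r).sub
      (summable_besselI1Coeff_mul_pow r)).congr fun k => by ring
  have hshift : x ^ 2 * besselI1 x = oddPowerSeries b x := by
    rw [besselI1_eq_oddPowerSeries]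
    refine sq_mul_oddPowerSeries hb (by simp [b]) (fun k => ?_) x
    rw [← besselI1Coeff_succ k]
    simp only [b]
    push_cast
    ring
  calc oddPowerSeries (fun k => (2 * k + 1) * ((2 * k + 1) * besselI1Coeff k)) x
      = oddPowerSeries (fun k => besselI1Coeff k + b k) x := by congr 1; ext k; ring
    _ = (1 + x ^ 2) * besselI1 x := by
      rw [oddPowerSeries_add summable_besselI1Coeff_mul_pow hb, ← besselI1_eq_oddPowerSeries,
        ← hshift]
      ring

lemma hasDerivAt_eulerBesselI1 {x : ℝ} (hx : x ≠ 0) :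
    HasDerivAt eulerBesselI1 ((1 + x ^ 2) * besselI1 x / x) x := by
  rw [← eulerSq_besselI1_eq]
  exact hasDerivAt_oddPowerSeries_of_ne_zero summable_eulerBesselI1Coeff_mul_pow hx

lemma besselI1_pos {x : ℝ} (hx : 0 < x) : 0 < besselI1 x :=
  besselI1_eq_oddPowerSeries ▸
    oddPowerSeries_pos summable_besselI1Coeff_mul_pow besselI1Coeff_pos hx

lemma besselI1_le_eulerBesselI1 {x : ℝ} (hx : 0 ≤ x) : besselI1 x ≤ eulerBesselI1 x :=
  besselI1_eq_oddPowerSeries ▸ oddPowerSeries_le_oddPowerSeries summable_besselI1Coeff_mul_pow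
    summable_eulerBesselI1Coeff_mul_pow
    (fun k => le_mul_of_one_le_left (besselI1Coeff_pos k).le (by linarith [k.cast_nonneg (α := ℝ)]))
    hx

lemma strictMonoOn_Ioi_of_hasDerivAt_pos {f f' : ℝ → ℝ} {a : ℝ}
    (hf : ∀ x ∈ Ioi a, HasDerivAt f (f' x) x) (hf' : ∀ x ∈ Ioi a, 0 < f' x) :
    StrictMonoOn f (Ioi a) :=
  strictMonoOn_of_hasDerivWithinAt_pos (convex_Ioi a)
    (fun x hx => (hf x hx).continuousAt.continuousWithinAt)
    (fun x hx => (hf x (by rwa [interior_Ioi] at hx)).hasDerivWithinAt)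
    (fun x hx => hf' x (by rwa [interior_Ioi] at hx))

lemma strictAntiOn_Ioi_of_hasDerivAt_neg {f f' : ℝ → ℝ} {a : ℝ}
    (hf : ∀ x ∈ Ioi a, HasDerivAt f (f' x) x) (hf' : ∀ x ∈ Ioi a, f' x < 0) :
    StrictAntiOn f (Ioi a) :=
  strictAntiOn_of_hasDerivWithinAt_neg (convex_Ioi a)
    (fun x hx => (hf x hx).continuousAt.continuousWithinAt)
    (fun x hx => (hf x (by rwa [interior_Ioi] at hx)).hasDerivWithinAt)
    (fun x hx => hf' x (by rwa [interior_Ioi] at hx))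

lemma strictMonoOn_mul_exp_mul_besselI1_sub_eulerBesselI1 :
    StrictMonoOn (fun t => t * exp t * ((1 + t) * besselI1 t - eulerBesselI1 t)) (Ici 0) := by
  refine strictMonoOn_of_hasDerivWithinAt_pos (convex_Ici 0)
    (Continuous.continuousOn (by fun_prop)) (f' := fun t => 3 * t * exp t * besselI1 t)
    (fun t ht => ?_) (fun t ht => ?_) <;> rw [interior_Ici, mem_Ioi] at ht
  · have ht0 : t ≠ 0 := ht.ne'
    refine HasDerivAt.hasDerivWithinAt ?_
    refine ((hasDerivAt_id' t).mul (hasDerivAt_exp t) |>.mul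
      ((((hasDerivAt_id' t).const_add 1).mul (hasDerivAt_besselI1 ht0)).sub
        (hasDerivAt_eulerBesselI1 ht0))).congr_deriv ?_
    simp only [Pi.mul_apply, Pi.sub_apply]
    field_simp
    ring
  · have := besselI1_pos ht
    positivity

lemma eulerBesselI1_lt {x : ℝ} (hx : 0 < x) : eulerBesselI1 x < (1 + x) * besselI1 x := by
  have h := strictMonoOn_mul_exp_mul_besselI1_sub_eulerBesselI1 self_mem_Ici
    (mem_Ici.2 hx.le) hx
  simp only [zero_mul] at h
  exact sub_pos.1 (pos_of_mul_pos_right h (by positivity))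

lemma strictMonoOn_exp_mul_eulerBesselI1_sub_div_sqrt :
    StrictMonoOn (fun t => exp t * (2 * eulerBesselI1 t - (2 * t - 1) * besselI1 t) / √t)
      (Ioi 0) := by
  refine strictMonoOn_Ioi_of_hasDerivAt_pos
    (f' := fun t => 3 * exp t * besselI1 t / (2 * t * √t))
    (fun t (ht : 0 < t) => ?_) (fun t (ht : 0 < t) => ?_)
  · have ht0 : t ≠ 0 := ht.ne'
    have hs : 0 < √t := Real.sqrt_pos.2 ht
    refine ((hasDerivAt_exp t).mul (((hasDerivAt_eulerBesselI1 ht0).const_mul 2).sub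
      ((((hasDerivAt_id' t).const_mul 2).sub_const 1).mul (hasDerivAt_besselI1 ht0)))
      |>.div (Real.hasDerivAt_sqrt ht0) hs.ne').congr_deriv ?_
    simp only [Pi.mul_apply, Pi.sub_apply]
    field_simp
    rw [Real.sq_sqrt ht.le]
    ring
  · have := besselI1_pos ht
    positivity

lemma lt_eulerBesselI1 {x : ℝ} (hx : 0 < x) : (2 * x - 1) * besselI1 x < 2 * eulerBesselI1 x := by
  have hI := besselI1_pos hx
  have hJ := besselI1_le_eulerBesselI1 hx.le
  rcases le_or_gt x 1 with hx1 | hx1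
  · nlinarith
  · have h1 : 0 < exp 1 * (2 * eulerBesselI1 1 - (2 * 1 - 1) * besselI1 1) / √1 := by
      have := besselI1_pos one_pos
      have := besselI1_le_eulerBesselI1 zero_le_one
      exact div_pos (mul_pos (exp_pos 1) (by linarith)) (Real.sqrt_pos.2 one_pos)
    have h := h1.trans (strictMonoOn_exp_mul_eulerBesselI1_sub_div_sqrt (mem_Ioi.2 one_pos)
      (mem_Ioi.2 hx) hx1)
    have := pos_of_mul_pos_right ((div_pos_iff_of_pos_right (Real.sqrt_pos.2 hx)).1 h)
      (exp_pos x).le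
    linarith

lemma strictAntiOn_exp_neg_mul_besselI1_div :
    StrictAntiOn (fun t => exp (-t) * besselI1 t / t) (Ioi 0) := by
  refine strictAntiOn_Ioi_of_hasDerivAt_neg
    (f' := fun t => exp (-t) * (eulerBesselI1 t - (1 + t) * besselI1 t) / t ^ 2)
    (fun t (ht : 0 < t) => ?_) (fun t (ht : 0 < t) => ?_)
  · have ht0 : t ≠ 0 := ht.ne'
    refine (((hasDerivAt_neg t).exp.mul (hasDerivAt_besselI1 ht0)).div (hasDerivAt_id t)
      ht0).congr_deriv ?_
    simp only [Pi.mul_apply, id]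
    field_simp
    ring
  · exact div_neg_of_neg_of_pos (mul_neg_of_pos_of_neg (exp_pos _)
      (sub_neg.2 (eulerBesselI1_lt ht))) (pow_pos ht 2)

lemma strictMonoOn_sqrt_mul_exp_neg_mul_besselI1 :
    StrictMonoOn (fun t => √t * exp (-t) * besselI1 t) (Ioi 0) := by
  refine strictMonoOn_Ioi_of_hasDerivAt_pos
    (f' := fun t => exp (-t) * (2 * eulerBesselI1 t - (2 * t - 1) * besselI1 t) / (2 * √t))
    (fun t (ht : 0 < t) => ?_) (fun t (ht : 0 < t) => ?_)
  · have ht0 : t ≠ 0 := ht.ne'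
    have hs : 0 < √t := Real.sqrt_pos.2 ht
    refine (((Real.hasDerivAt_sqrt ht0).mul (hasDerivAt_neg t).exp).mul
      (hasDerivAt_besselI1 ht0)).congr_deriv ?_
    simp only [Pi.mul_apply]
    field_simp
    rw [Real.sq_sqrt ht.le]
    ring
  · have := sub_pos.2 (lt_eulerBesselI1 ht)
    have : 0 < √t := Real.sqrt_pos.2 ht
    positivity

/-- Lemma A.6, ratio bounds: for `0 < x < y`,
`e^{x−y} (x/y) < I₁(x)/I₁(y) < e^{x−y} (y/x)^{1/2}`. -/
theorem besselI1_ratio_bounds (x y : ℝ) (hx : 0 < x) (hxy : x < y) :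
    Real.exp (x - y) * (x / y) < besselI1 x / besselI1 y
      ∧ besselI1 x / besselI1 y < Real.exp (x - y) * Real.sqrt (y / x) := by
  have hy : 0 < y := hx.trans hxy
  have hIx := besselI1_pos hx
  have hIy := besselI1_pos hy
  have hlow := strictAntiOn_exp_neg_mul_besselI1_div (mem_Ioi.2 hx) (mem_Ioi.2 hy) hxy
  have hup := strictMonoOn_sqrt_mul_exp_neg_mul_besselI1 (mem_Ioi.2 hx) (mem_Ioi.2 hy) hxy
  simp only at hlow hup
  have hsx : 0 < √x := Real.sqrt_pos.2 hx
  rw [Real.sqrt_div hy.le, Real.exp_sub]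
  constructor
  · rw [lt_div_iff₀ hIy]
    rw [Real.exp_neg, Real.exp_neg] at hlow
    field_simp at hlow ⊢
    linarith
  · rw [div_lt_iff₀ hIy]
    rw [Real.exp_neg, Real.exp_neg] at hup
    field_simp at hup ⊢
    linarith
end
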